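/- Let n ≥ 4 and let S_n be the star graph on vertices {0,1,...,n-1}. The rank (minimum cardinality of a generating set) of the monoid PsEnd(S_n) of all partial strong endomorphisms of S_n is 6, the rank of PswEnd(S_n) is 7, the rank of PEnd(S_n) is 7, the rank of PwEnd(S_n) is 7, and the rank of IEnd(S_n) is 6. -/

import Mathlib

def pmul {V : Type*} (f g : V → Option V) : V → Option V := fun x => (f x).bind g

def pdom {V : Type*} (f : V → Option V) : Set V := {x | f x ≠ none}

def pim {V : Type*} (f : V → Option V) : Set V := {y | ∃ x, f x = some y}

def pker {V : Type*} (f : V → Option V) : V → V → Prop := fun x y => f x ≠ none ∧ f x = f y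

def PInj {V : Type*} (f : V → Option V) : Prop := ∀ u v a, f u = some a → f v = some a → u = v

def edge {n : ℕ} (u v : Fin n) : Prop := (u.val = 0 ∧ v.val ≠ 0) ∨ (v.val = 0 ∧ u.val ≠ 0)

def IsPEnd {n : ℕ} (α : Fin n → Option (Fin n)) : Prop :=
  ∀ u v a b, α u = some a → α v = some b → edge u v → edge a b

def IsPwEnd {n : ℕ} (α : Fin n → Option (Fin n)) : Prop :=
  ∀ u v a b, α u = some a → α v = some b → edge u v → a ≠ b → edge a b

def IsPsEnd {n : ℕ} (α : Fin n → Option (Fin n)) : Prop :=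
  ∀ u v a b, α u = some a → α v = some b → (edge u v ↔ edge a b)

def IsPswEnd {n : ℕ} (α : Fin n → Option (Fin n)) : Prop :=
  ∀ u v a b, α u = some a → α v = some b → ((edge u v ∧ a ≠ b) ↔ edge a b)

def PEndS (n : ℕ) : Set (Fin n → Option (Fin n)) := {α | IsPEnd α}
def PwEndS (n : ℕ) : Set (Fin n → Option (Fin n)) := {α | IsPwEnd α}
def PsEndS (n : ℕ) : Set (Fin n → Option (Fin n)) := {α | IsPsEnd α}
def PswEndS (n : ℕ) : Set (Fin n → Option (Fin n)) := {α | IsPswEnd α}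
def IEndS (n : ℕ) : Set (Fin n → Option (Fin n)) := {α | PInj α ∧ IsPEnd α}
def PAutS (n : ℕ) : Set (Fin n → Option (Fin n)) := {α | PInj α ∧ IsPsEnd α}

def RegularIn {V : Type*} (M : Set (V → Option V)) (a : V → Option V) : Prop :=
  ∃ b ∈ M, pmul (pmul a b) a = a

def GreenL {V : Type*} (M : Set (V → Option V)) (a b : V → Option V) : Prop :=
  (∃ g ∈ M, a = pmul g b) ∧ (∃ g ∈ M, b = pmul g a)

def GreenR {V : Type*} (M : Set (V → Option V)) (a b : V → Option V) : Prop :=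
  (∃ g ∈ M, a = pmul b g) ∧ (∃ g ∈ M, b = pmul a g)

def GreenH {V : Type*} (M : Set (V → Option V)) (a b : V → Option V) : Prop :=
  GreenL M a b ∧ GreenR M a b

def GreenJ {V : Type*} (M : Set (V → Option V)) (a b : V → Option V) : Prop :=
  (∃ g ∈ M, ∃ h ∈ M, a = pmul (pmul g b) h) ∧ (∃ g ∈ M, ∃ h ∈ M, b = pmul (pmul g a) h)

inductive genFrom {V : Type*} (S : Set (V → Option V)) : (V → Option V) → Prop
  | one : genFrom S (fun x => some x)
  | mem (a : V → Option V) (h : a ∈ S) : genFrom S a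
  | mul (a b : V → Option V) (ha : genFrom S a) (hb : genFrom S b) : genFrom S (pmul a b)

def rankIs {V : Type*} (M : Set (V → Option V)) (r : ℕ) : Prop :=
  IsLeast {k : ℕ | ∃ S : Set (V → Option V),
    S.Finite ∧ S.ncard = k ∧ S ⊆ M ∧ {a | genFrom S a} = M} r

/-!
Lower bounds. The permutations fixing the centre lie in each monoid and, as there are three leaves,
they do not commute; since units factor only into units, a generating set contains two units. Every
further generator is forced by a set `C` of non-units meeting the monoid such that `b c ∈ C` implies
`b ∈ C` or `c ∈ C` for `b`, `c` in the monoid, so that every generating set meets `C`. Apart from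
the maps moving the centre, each such `C` consists of maps of rank `(pim a).ncard ≥ n - 1` of a
prescribed shape, and the dichotomy comes from `rank (b c) ≤ min (rank b) (rank c)` together with
the fact that a weak endomorphism sending the centre to a leaf has rank at most `2`. The sets
chosen for one monoid are pairwise disjoint inside it.

Upper bounds. A strong endomorphism preserves or swaps the bipartition {centre} ∪ leaves. A map
preserving it is a partial identity followed by a total map, and total maps are permutations
composed with collapses of one leaf onto another; a swapping map factors through the fold of the
star onto an edge. One more generator provides the constant maps (strong weak endomorphisms), or
the maps sending a leaf to the centre (the other monoids). For injective maps, the partial swap of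
an edge replaces the fold and no collapse is needed.
-/

open Equiv

theorem Equiv.Perm.exists_closure_pair_eq_top (α : Type*) [Fintype α] [DecidableEq α] :
    ∃ σ τ : Perm α, Subgroup.closure ({σ, τ} : Set (Perm α)) = ⊤ := by
  obtain h | h := lt_or_ge (Fintype.card α) 2
  · have : Subsingleton α := Fintype.card_le_one_iff_subsingleton.mp (by omega)
    exact ⟨1, 1, Subsingleton.elim _ _⟩
  obtain ⟨k, hk⟩ := Nat.exists_eq_add_of_le' h
  let e : Perm (Fin (k + 2)) ≃* Perm α := (Fintype.equivFinOfCardEq hk).symm.permCongrHom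
  refine ⟨e (finRotate _), e (swap 0 (finRotate _ 0)), ?_⟩
  rw [← Set.image_pair]
  change Subgroup.closure (e.toMonoidHom '' _) = ⊤
  rw [← MonoidHom.map_closure, closure_cycle_adjacent_swap isCycle_finRotate support_finRotate 0]
  exact Subgroup.map_top_of_surjective _ e.surjective

lemma Equiv.Perm.exists_apply_eq_pair {α : Type*} [DecidableEq α] {a b c d z : α} (hab : a ≠ b)
    (hcd : c ≠ d) (ha : a ≠ z) (hb : b ≠ z) (hc : c ≠ z) (hd : d ≠ z) :
    ∃ σ : Perm α, σ a = c ∧ σ b = d ∧ σ z = z := by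
  have hb' : swap a c b ≠ c := fun h =>
    hab ((swap a c).injective (h.trans (swap_apply_left a c).symm)).symm
  have hz' : swap a c b ≠ z := fun h =>
    hb ((swap a c).injective (h.trans (swap_apply_of_ne_of_ne ha.symm hc.symm).symm))
  refine ⟨swap (swap a c b) d * swap a c, ?_, ?_, ?_⟩
  · simp only [Perm.mul_apply, swap_apply_left]
    exact swap_apply_of_ne_of_ne hb'.symm hcd
  · simp only [Perm.mul_apply, swap_apply_left]
  · simp only [Perm.mul_apply, swap_apply_of_ne_of_ne ha.symm hc.symm]
    exact swap_apply_of_ne_of_ne hz'.symm hd.symm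

lemma List.Nodup.length_le_ncard {α : Type*} {l : List α} (hl : l.Nodup) {S : Set α}
    (hS : S.Finite) (hlS : ∀ x ∈ l, x ∈ S) : l.length ≤ S.ncard := by
  classical
  rw [← List.toFinset_card_of_nodup hl, ← Set.ncard_coe_finset]
  exact Set.ncard_le_ncard (fun x hx => hlS x (by simpa using hx)) hS

section PartialMaps

variable {V : Type*}

def PTotal (a : V → Option V) : Prop := ∀ x, a x ≠ none

def pperm (σ : Perm V) : V → Option V := fun x => some (σ x)

def pdomId (a : V → Option V) : V → Option V := fun x => (a x).map fun _ => x

@[simp] lemma pmul_apply (a b : V → Option V) (x : V) : pmul a b x = (a x).bind b := rfl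

lemma pmul_apply_of_eq_some {a b : V → Option V} {x m : V} (h : a x = some m) :
    pmul a b x = b m := by
  simp [h]

lemma pmul_apply_of_eq_none {a b : V → Option V} {x : V} (h : a x = none) :
    pmul a b x = none := by
  simp [h]

lemma pmul_eq_some_iff {a b : V → Option V} {x v : V} :
    pmul a b x = some v ↔ ∃ m, a x = some m ∧ b m = some v :=
  Option.bind_eq_some_iff

lemma pmul_assoc (a b c : V → Option V) : pmul (pmul a b) c = pmul a (pmul b c) := by
  funext x
  simp only [pmul_apply]
  cases a x <;> rfl

@[simp] lemma pperm_apply (σ : Perm V) (x : V) : pperm σ x = some (σ x) := rfl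

lemma pmul_pperm_pperm (σ τ : Perm V) : pmul (pperm σ) (pperm τ) = pperm (τ * σ) := rfl

lemma pmul_pperm_left (σ : Perm V) (a : V → Option V) :
    pmul (pperm σ) a = fun x => a (σ x) := rfl

lemma pmul_pperm_right (a : V → Option V) (σ : Perm V) :
    pmul a (pperm σ) = fun x => (a x).map σ := by
  funext x
  simp only [pmul_apply]
  cases a x <;> rfl

lemma pTotal_pperm (σ : Perm V) : PTotal (pperm σ) := fun _ => Option.some_ne_none _

lemma pInj_pperm (σ : Perm V) : PInj (pperm σ) := fun _ _ _ hx hy =>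
  σ.injective (Option.some_injective _ (hx.trans hy.symm))

lemma PInj.pmul {a b : V → Option V} (ha : PInj a) (hb : PInj b) : PInj (pmul a b) := by
  intro x y v hx hy
  obtain ⟨m, hxm, hm⟩ := pmul_eq_some_iff.mp hx
  obtain ⟨m', hym, hm'⟩ := pmul_eq_some_iff.mp hy
  obtain rfl := hb m m' v hm hm'
  exact ha x y m hxm hym

lemma PTotal.exists_eq_some {a : V → Option V} (ha : PTotal a) (x : V) : ∃ v, a x = some v :=
  Option.ne_none_iff_exists'.mp (ha x)

lemma PTotal.surjective [Finite V] {a : V → Option V} (ht : PTotal a) (hi : PInj a)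
    (y : V) : ∃ x, a x = some y := by
  choose f hf using ht.exists_eq_some
  have hinj : Function.Injective f := fun x x' h => hi x x' (f x) (hf x) (h ▸ hf x')
  obtain ⟨x, rfl⟩ := Finite.surjective_of_injective hinj y
  exact ⟨x, hf x⟩

@[simp] lemma pmul_id_left (a : V → Option V) : pmul (fun x => some x) a = a := rfl

@[simp] lemma pmul_id_right (a : V → Option V) : pmul a (fun x => some x) = a := by
  funext x
  simp only [pmul_apply]
  cases a x <;> rfl

lemma mem_of_genFrom {S T : Set (V → Option V)} (hS : S ⊆ T) (hone : (fun x => some x) ∈ T)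
    (hmul : ∀ a b, a ∈ T → b ∈ T → pmul a b ∈ T) {a : V → Option V}
    (ha : genFrom S a) : a ∈ T := by
  induction ha with
  | one => exact hone
  | mem a h => exact hS h
  | mul a b _ _ iha ihb => exact hmul a b iha ihb

lemma setOf_genFrom_eq {S M : Set (V → Option V)} (hSM : S ⊆ M) (hone : (fun x => some x) ∈ M)
    (hmul : ∀ a b, a ∈ M → b ∈ M → pmul a b ∈ M) (hgen : ∀ a ∈ M, genFrom S a) :
    {a | genFrom S a} = M :=
  Set.ext fun a => ⟨mem_of_genFrom hSM hone hmul, hgen a⟩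

lemma genFrom_iff_of_setOf_eq {S M : Set (V → Option V)} (hgen : {a | genFrom S a} = M)
    {a : V → Option V} : genFrom S a ↔ a ∈ M := by
  rw [← hgen]
  rfl

lemma exists_mem_of_genFrom {S C : Set (V → Option V)} {a : V → Option V} (ha : genFrom S a)
    (haC : a ∈ C) (hone : (fun x => some x) ∉ C)
    (hC : ∀ b c, genFrom S b → genFrom S c → pmul b c ∈ C → b ∈ C ∨ c ∈ C) :
    ∃ s ∈ S, s ∈ C := by
  by_contra! hSC
  have hT : a ∈ {b | genFrom S b ∧ b ∉ C} := by
    refine mem_of_genFrom (T := {b | genFrom S b ∧ b ∉ C})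
      (fun s hs => ⟨genFrom.mem s hs, hSC s hs⟩) ⟨genFrom.one, hone⟩
      (fun b c hb hc => ⟨genFrom.mul b c hb.1 hc.1, fun h => ?_⟩) ha
    exact (hC b c hb.1 hc.1 h).elim hb.2 hc.2
  exact hT.2 haC

lemma exists_mem_of_setOf_genFrom_eq {S M C : Set (V → Option V)}
    (hgen : {a | genFrom S a} = M) {a : V → Option V} (ha : a ∈ M) (haC : a ∈ C)
    (hone : (fun x => some x) ∉ C)
    (hC : ∀ b ∈ M, ∀ c ∈ M, pmul b c ∈ C → b ∈ C ∨ c ∈ C) : ∃ s ∈ S, s ∈ C :=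
  exists_mem_of_genFrom ((genFrom_iff_of_setOf_eq hgen).mpr ha) haC hone fun b c hb hc =>
    hC b ((genFrom_iff_of_setOf_eq hgen).mp hb) c ((genFrom_iff_of_setOf_eq hgen).mp hc)

lemma rankIs_of_le {M : Set (V → Option V)} {r : ℕ}
    (hup : ∃ S, S.Finite ∧ S.ncard ≤ r ∧ S ⊆ M ∧ {a | genFrom S a} = M)
    (hlow : ∀ S : Set (V → Option V), S.Finite → {a | genFrom S a} = M → r ≤ S.ncard) :
    rankIs M r := by
  obtain ⟨S, hS, hr, hSM, hgen⟩ := hup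
  exact ⟨⟨S, hS, le_antisymm hr (hlow S hS hgen), hSM, hgen⟩,
    fun k ⟨S', hS', hk, _, hgen'⟩ => hk ▸ hlow S' hS' hgen'⟩

lemma pTotal_and_pInj_of_pmul [Finite V] {b c : V → Option V} (ht : PTotal (pmul b c))
    (hi : PInj (pmul b c)) : (PTotal b ∧ PInj b) ∧ (PTotal c ∧ PInj c) := by
  have hbt : PTotal b := fun x hx => ht x (pmul_apply_of_eq_none hx)
  have hbi : PInj b := by
    intro x y m hx hy
    obtain ⟨v, hv⟩ := ht.exists_eq_some x
    rw [pmul_apply_of_eq_some hx] at hv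
    exact hi x y v (by rw [pmul_apply_of_eq_some hx, hv]) (by rw [pmul_apply_of_eq_some hy, hv])
  refine ⟨⟨hbt, hbi⟩, fun y hy => ?_, fun y y' v hy hy' => ?_⟩
  · obtain ⟨x, hx⟩ := hbt.surjective hbi y
    exact ht x (by rw [pmul_apply_of_eq_some hx, hy])
  · obtain ⟨x, hx⟩ := hbt.surjective hbi y
    obtain ⟨x', hx'⟩ := hbt.surjective hbi y'
    obtain rfl := hi x x' v (by rw [pmul_apply_of_eq_some hx, hy])
      (by rw [pmul_apply_of_eq_some hx', hy'])
    exact Option.some_injective _ (hx.symm.trans hx')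

lemma genFrom_inter_units [Finite V] {S : Set (V → Option V)} {a : V → Option V}
    (ha : genFrom S a) (hu : PTotal a ∧ PInj a) :
    genFrom (S ∩ {u | PTotal u ∧ PInj u}) a := by
  induction ha with
  | one => exact genFrom.one
  | mem a h => exact genFrom.mem a ⟨h, hu⟩
  | mul b c _ _ ihb ihc =>
    obtain ⟨hb, hc⟩ := pTotal_and_pInj_of_pmul hu.1 hu.2
    exact genFrom.mul b c (ihb hb) (ihc hc)

lemma pmul_comm_of_genFrom {S : Set (V → Option V)} (hS : S.Subsingleton) {a b : V → Option V}
    (ha : genFrom S a) (hb : genFrom S b) : pmul a b = pmul b a := by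
  have key : ∀ x, genFrom S x → ∀ g ∈ S, pmul x g = pmul g x := by
    intro x hx g hg
    induction hx with
    | one => simp
    | mem x h => rw [hS h hg]
    | mul u v _ _ ihu ihv => rw [pmul_assoc, ihv, ← pmul_assoc, ihu, pmul_assoc]
  induction hb with
  | one => simp
  | mem b h => exact key a ha b h
  | mul u v hu hv ihu ihv => rw [← pmul_assoc, ihu, pmul_assoc, ihv, ← pmul_assoc]

lemma exists_units_ne_of_genFrom [Finite V] {S : Set (V → Option V)} {a b : V → Option V}
    (ha : genFrom S a) (hb : genFrom S b) (hua : PTotal a ∧ PInj a) (hub : PTotal b ∧ PInj b)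
    (hab : pmul a b ≠ pmul b a) :
    ∃ u ∈ S, ∃ u' ∈ S, u ≠ u' ∧ (PTotal u ∧ PInj u) ∧ (PTotal u' ∧ PInj u') := by
  have hS : ¬ (S ∩ {u | PTotal u ∧ PInj u}).Subsingleton := fun hS =>
    hab (pmul_comm_of_genFrom hS (genFrom_inter_units ha hua) (genFrom_inter_units hb hub))
  obtain ⟨u, hu, u', hu', hne⟩ := Set.not_subsingleton_iff.mp hS
  exact ⟨u, hu.1, u', hu'.1, hne, hu.2, hu'.2⟩

def genPerms (S : Set (V → Option V)) : Submonoid (Perm V) where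
  carrier := {σ | genFrom S (pperm σ)}
  one_mem' := genFrom.one
  mul_mem' {σ τ} hσ hτ := by
    rw [Set.mem_ofPred_eq, ← pmul_pperm_pperm]
    exact genFrom.mul _ _ hτ hσ

lemma exists_perm_pair_genFrom [Fintype V] [DecidableEq V] (c : V) :
    ∃ σ τ : Perm V, σ c = c ∧ τ c = c ∧ ∀ S : Set (V → Option V), pperm σ ∈ S →
      pperm τ ∈ S → ∀ ρ : Perm V, ρ c = c → genFrom S (pperm ρ) := by
  obtain ⟨σ, τ, h⟩ := Perm.exists_closure_pair_eq_top {x // x ≠ c}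
  refine ⟨Perm.ofSubtype σ, Perm.ofSubtype τ, Perm.ofSubtype_apply_of_not_mem σ (by simp),
    Perm.ofSubtype_apply_of_not_mem τ (by simp), fun S hσ hτ ρ hρ => ?_⟩
  have hle : Submonoid.closure {σ, τ} ≤ (genPerms S).comap Perm.ofSubtype := by
    rw [Submonoid.closure_le]
    rintro _ (rfl | rfl)
    exacts [genFrom.mem _ hσ, genFrom.mem _ hτ]
  rw [← Subgroup.closure_toSubmonoid_of_finite, h] at hle
  have hp : ∀ x, ρ x ≠ c ↔ x ≠ c :=
    fun x => not_congr ⟨fun h => ρ.injective (h.trans hρ.symm), fun h => h ▸ hρ⟩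
  have hρS := hle (Subgroup.mem_top (ρ.subtypePerm hp))
  have hρ' : Perm.ofSubtype (ρ.subtypePerm hp) = ρ :=
    Perm.ofSubtype_subtypePerm (p := fun x => x ≠ c) hp fun x hx hxc => hx (hxc ▸ hρ)
  rw [Submonoid.mem_comap, hρ'] at hρS
  exact hρS

lemma PInj.exists_perm [Finite V] {a : V → Option V} (ha : PInj a) :
    ∃ σ : Perm V, ∀ x v, a x = some v → σ x = v := by
  classical
  choose f hf using fun x : {x // a x ≠ none} => Option.ne_none_iff_exists'.mp x.2
  have hinj : Function.Injective f := fun x x' h =>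
    Subtype.ext (ha x x' (f x) (hf x) (h ▸ hf x'))
  have hsurj : ∀ y : {y // y ∈ pim a}, ∃ x, f x = y := by
    rintro ⟨y, x, hx⟩
    exact ⟨⟨x, by simp [hx]⟩, Option.some_injective _ ((hf _).symm.trans hx)⟩
  let e : {x // a x ≠ none} ≃ {y // y ∈ pim a} := Equiv.ofBijective
    (fun x => ⟨f x, x, hf x⟩)
    ⟨fun x x' h => hinj (congrArg Subtype.val h), fun y => (hsurj y).imp fun x hx =>
      Subtype.ext hx⟩
  refine ⟨e.extendSubtype, fun x v hx => ?_⟩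
  rw [e.extendSubtype_apply_of_mem x (by simp [hx])]
  exact Option.some_injective _ ((hf ⟨x, by simp [hx]⟩).symm.trans hx)

variable [DecidableEq V]

def undef (x : V) : V → Option V := fun y => if y = x then none else some y

def collapse (v w : V) : V → Option V := fun y => some (if y = v then w else y)

lemma pInj_undef (x : V) : PInj (undef x) := by
  intro y z v hy hz
  by_cases hyx : y = x <;> by_cases hzx : z = x <;> simp_all [undef]

lemma genFrom_pdomId [Fintype V] {S : Set (V → Option V)} (hundef : ∀ x, genFrom S (undef x))
    (a : V → Option V) : genFrom S (pdomId a) := by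
  suffices h : ∀ K : Finset V, genFrom S fun y => if y ∈ K then none else some y by
    convert h (Finset.univ.filter fun y => a y = none) using 1
    funext y
    cases hy : a y <;> simp [pdomId, hy]
  intro K
  induction K using Finset.induction_on with
  | empty => simpa using genFrom.one
  | insert x K hxK ih =>
    convert genFrom.mul _ _ ih (hundef x) using 1
    funext y
    by_cases hy : y = x
    · subst hy
      simp [undef, hxK]
    · by_cases hyK : y ∈ K <;> simp [undef, hy, hyK]

end PartialMaps

section Rank

variable {V : Type*}

lemma image_some_pim_pmul_subset (b c : V → Option V) :
    some '' pim (pmul b c) ⊆ c '' pim b := by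
  rintro _ ⟨v, ⟨x, hx⟩, rfl⟩
  obtain ⟨m, hm, hmv⟩ := pmul_eq_some_iff.mp hx
  exact ⟨m, ⟨x, hm⟩, hmv⟩

lemma image_pdom_eq (a : V → Option V) : a '' pdom a = some '' pim a := by
  ext w
  constructor
  · rintro ⟨x, hx, rfl⟩
    obtain ⟨v, hv⟩ := Option.ne_none_iff_exists'.mp hx
    exact ⟨v, ⟨x, hv⟩, hv.symm⟩
  · rintro ⟨v, ⟨x, hx⟩, rfl⟩
    exact ⟨x, by simp [pdom, hx], hx⟩

variable [Finite V]

lemma ncard_pim_pmul_le_left (b c : V → Option V) :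
    (pim (pmul b c)).ncard ≤ (pim b).ncard := by
  rw [← Set.ncard_image_of_injective _ (Option.some_injective V)]
  exact (Set.ncard_le_ncard (image_some_pim_pmul_subset b c)).trans (Set.ncard_image_le)

lemma ncard_pim_pmul_le_right (b c : V → Option V) :
    (pim (pmul b c)).ncard ≤ (pim c).ncard := by
  refine Set.ncard_le_ncard ?_
  rintro v ⟨x, hx⟩
  obtain ⟨m, -, hmv⟩ := pmul_eq_some_iff.mp hx
  exact ⟨m, hmv⟩

lemma ncard_pim_pmul_lt {b c : V → Option V} {y : V} (hy : y ∈ pim b)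
    (hc : c y = none ∨ ∃ y' ∈ pim b, y' ≠ y ∧ c y' = c y) :
    (pim (pmul b c)).ncard < (pim b).ncard := by
  have hsub : some '' pim (pmul b c) ⊆ c '' (pim b \ {y}) := by
    intro w hw
    obtain ⟨m, hm, hmw⟩ := image_some_pim_pmul_subset b c hw
    by_cases hmy : m = y
    · subst hmy
      rcases hc with hc | ⟨y', hy', hne, hc⟩
      · obtain ⟨v, -, rfl⟩ := hw
        exact absurd (hmw.symm.trans hc) (Option.some_ne_none v)
      · exact ⟨y', ⟨hy', hne⟩, hc.trans hmw⟩
    · exact ⟨m, ⟨hm, hmy⟩, hmw⟩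
  rw [← Set.ncard_image_of_injective _ (Option.some_injective V)]
  calc (some '' pim (pmul b c)).ncard ≤ (c '' (pim b \ {y})).ncard := Set.ncard_le_ncard hsub
    _ ≤ (pim b \ {y}).ncard := Set.ncard_image_le
    _ < (pim b).ncard := Set.ncard_lt_ncard (Set.sdiff_singleton_ssubset.mpr hy)

lemma ncard_pim_le_ncard_pdom (a : V → Option V) : (pim a).ncard ≤ (pdom a).ncard := by
  rw [← Set.ncard_image_of_injective _ (Option.some_injective V)]
  exact (image_pdom_eq a ▸ Set.ncard_image_le : (some '' pim a).ncard ≤ (pdom a).ncard)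

lemma ncard_pim_lt_of_not_pTotal {a : V → Option V} (ha : ¬ PTotal a) :
    (pim a).ncard < Nat.card V := by
  refine (ncard_pim_le_ncard_pdom a).trans_lt (Set.ncard_lt_card fun h => ha fun x => ?_)
  have hx : x ∈ pdom a := h ▸ Set.mem_univ x
  exact hx

lemma pim_eq_univ_of_pTotal {a : V → Option V} (ht : PTotal a) (hi : PInj a) : pim a = .univ :=
  Set.eq_univ_of_forall (ht.surjective hi)

lemma pim_eq_univ_of_le_ncard {a : V → Option V} (h : Nat.card V ≤ (pim a).ncard) :
    pim a = .univ :=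
  (Set.eq_univ_iff_ncard _).mpr (le_antisymm (Set.ncard_le_card _) h)

lemma pTotal_and_pInj_of_pim_eq_univ {a : V → Option V} (h : pim a = .univ) :
    PTotal a ∧ PInj a := by
  have hcard : (pim a).ncard = (pdom a).ncard :=
    le_antisymm (ncard_pim_le_ncard_pdom a) (h ▸ Set.ncard_univ V ▸ Set.ncard_le_card _)
  have hdom : pdom a = .univ :=
    (Set.eq_univ_iff_ncard _).mpr (hcard ▸ (Set.eq_univ_iff_ncard _).mp h)
  have hinj : Set.InjOn a (pdom a) := Set.injOn_of_ncard_image_eq (by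
    rw [image_pdom_eq, Set.ncard_image_of_injective _ (Option.some_injective V), hcard])
  refine ⟨fun x => ?_, fun x y v hx hy => hinj ?_ ?_ (hx.trans hy.symm)⟩
  all_goals exact (hdom ▸ Set.mem_univ _ : _ ∈ pdom a)

end Rank

section Star

variable {n : ℕ}

lemma IsPsEnd.isPEnd {a : Fin n → Option (Fin n)} (h : IsPsEnd a) : IsPEnd a :=
  fun u v x y hu hv => (h u v x y hu hv).mp

lemma IsPEnd.isPwEnd {a : Fin n → Option (Fin n)} (h : IsPEnd a) : IsPwEnd a :=
  fun u v x y hu hv he _ => h u v x y hu hv he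

lemma IsPswEnd.isPwEnd {a : Fin n → Option (Fin n)} (h : IsPswEnd a) : IsPwEnd a :=
  fun u v x y hu hv he hne => (h u v x y hu hv).mp ⟨he, hne⟩

lemma IsPEnd.pmul {a b : Fin n → Option (Fin n)} (ha : IsPEnd a) (hb : IsPEnd b) :
    IsPEnd (pmul a b) := by
  intro u v x y hu hv he
  obtain ⟨m, hum, hm⟩ := pmul_eq_some_iff.mp hu
  obtain ⟨m', hvm, hm'⟩ := pmul_eq_some_iff.mp hv
  exact hb m m' x y hm hm' (ha u v m m' hum hvm he)

lemma IsPwEnd.pmul {a b : Fin n → Option (Fin n)} (ha : IsPwEnd a) (hb : IsPwEnd b) :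
    IsPwEnd (pmul a b) := by
  intro u v x y hu hv he hne
  obtain ⟨m, hum, hm⟩ := pmul_eq_some_iff.mp hu
  obtain ⟨m', hvm, hm'⟩ := pmul_eq_some_iff.mp hv
  have hmm' : m ≠ m' := by
    rintro rfl
    exact hne (Option.some_injective _ (hm.symm.trans hm'))
  exact hb m m' x y hm hm' (ha u v m m' hum hvm he hmm') hne

lemma IsPsEnd.pmul {a b : Fin n → Option (Fin n)} (ha : IsPsEnd a) (hb : IsPsEnd b) :
    IsPsEnd (pmul a b) := by
  intro u v x y hu hv
  obtain ⟨m, hum, hm⟩ := pmul_eq_some_iff.mp hu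
  obtain ⟨m', hvm, hm'⟩ := pmul_eq_some_iff.mp hv
  exact (ha u v m m' hum hvm).trans (hb m m' x y hm hm')

lemma IsPswEnd.pmul {a b : Fin n → Option (Fin n)} (ha : IsPswEnd a) (hb : IsPswEnd b) :
    IsPswEnd (pmul a b) := by
  intro u v x y hu hv
  obtain ⟨m, hum, hm⟩ := pmul_eq_some_iff.mp hu
  obtain ⟨m', hvm, hm'⟩ := pmul_eq_some_iff.mp hv
  rw [← hb m m' x y hm hm', ← ha u v m m' hum hvm]
  constructor
  · rintro ⟨he, hne⟩
    refine ⟨⟨he, ?_⟩, hne⟩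
    rintro rfl
    exact hne (Option.some_injective _ (hm.symm.trans hm'))
  · rintro ⟨⟨he, -⟩, hne⟩
    exact ⟨he, hne⟩

lemma le_ncard_pim_of_forall_ne {a : Fin n → Option (Fin n)} (l : Fin n)
    (h : ∀ y ≠ l, y ∈ pim a) : n - 1 ≤ (pim a).ncard := by
  calc n - 1 = ({l}ᶜ : Set (Fin n)).ncard := by
        rw [Set.ncard_compl, Set.ncard_singleton, Nat.card_eq_fintype_card, Fintype.card_fin]
    _ ≤ (pim a).ncard := Set.ncard_le_ncard fun y hy => h y hy

variable [NeZero n]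

lemma edge_iff (u v : Fin n) : edge u v ↔ (u = 0 ↔ v ≠ 0) := by
  simp only [edge, ne_eq, Fin.val_eq_zero_iff]
  tauto

lemma IsPsEnd.isPswEnd {a : Fin n → Option (Fin n)} (h : IsPsEnd a) : IsPswEnd a := by
  intro u v x y hu hv
  rw [h u v x y hu hv, edge_iff]
  exact ⟨And.left, fun he => ⟨he, by rintro rfl; tauto⟩⟩

def PreservesCenter (a : Fin n → Option (Fin n)) : Prop :=
  ∀ x v, a x = some v → (x = 0 ↔ v = 0)

def SwapsCenter (a : Fin n → Option (Fin n)) : Prop :=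
  ∀ x v, a x = some v → (x = 0 ↔ v ≠ 0)

lemma PreservesCenter.isPsEnd {a : Fin n → Option (Fin n)} (h : PreservesCenter a) :
    IsPsEnd a := by
  intro u v x y hu hv
  simp only [edge_iff, ne_eq, h u x hu, h v y hv]

lemma SwapsCenter.isPsEnd {a : Fin n → Option (Fin n)} (h : SwapsCenter a) : IsPsEnd a := by
  intro u v x y hu hv
  simp only [edge_iff, ne_eq, h u x hu, h v y hv]
  tauto

lemma preservesCenter_id : PreservesCenter (fun x : Fin n => some x) := by
  rintro x v ⟨⟩
  rfl

lemma preservesCenter_pperm {σ : Perm (Fin n)} (hσ : σ 0 = 0) : PreservesCenter (pperm σ) := by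
  rintro x v ⟨⟩
  rw [← σ.injective.eq_iff, hσ]

lemma preservesCenter_pdomId (a : Fin n → Option (Fin n)) : PreservesCenter (pdomId a) := by
  intro x v hx
  obtain ⟨u, -, rfl⟩ := Option.map_eq_some_iff.mp hx
  rfl

lemma preservesCenter_of_forall_ne_zero {a : Fin n → Option (Fin n)}
    (h0 : a 0 = none ∨ a 0 = some 0) (h : ∀ x ≠ 0, a x ≠ some 0) : PreservesCenter a := by
  intro x v hx
  by_cases hx0 : x = 0
  · subst hx0
    rcases h0 with h0 | h0 <;> simp_all
  · exact iff_of_false hx0 fun hv => h x hx0 (hv ▸ hx)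

lemma IsPsEnd.preservesCenter_or_swapsCenter {a : Fin n → Option (Fin n)} (h : IsPsEnd a) :
    PreservesCenter a ∨ SwapsCenter a := by
  refine or_iff_not_imp_left.mpr fun hp y w hy => ?_
  simp only [PreservesCenter, not_forall] at hp
  obtain ⟨x, v, hx, hxv⟩ := hp
  have := h x y v w hx hy
  rw [edge_iff, edge_iff] at this
  tauto

lemma IsPEnd.preservesCenter {a : Fin n → Option (Fin n)} (h : IsPEnd a) (h0 : a 0 = some 0) :
    PreservesCenter a := by
  intro x v hx
  by_cases hx0 : x = 0
  · subst hx0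
    simp_all
  · have := h 0 x 0 v h0 hx ((edge_iff 0 x).mpr (by simpa using hx0))
    simp only [edge_iff, true_iff] at this
    exact iff_of_false hx0 this

lemma IsPEnd.swapsCenter {a : Fin n → Option (Fin n)} (h : IsPEnd a) {c : Fin n}
    (h0 : a 0 = some c) (hc : c ≠ 0) : SwapsCenter a := by
  intro x v hx
  by_cases hx0 : x = 0
  · subst hx0
    obtain rfl := Option.some_injective _ (h0.symm.trans hx)
    simpa using hc
  · have := h 0 x c v h0 hx ((edge_iff 0 x).mpr (by simpa using hx0))
    rw [edge_iff] at this
    tauto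

lemma IsPwEnd.eq_zero_or_eq {a : Fin n → Option (Fin n)} (h : IsPwEnd a) {c : Fin n}
    (h0 : a 0 = some c) (hc : c ≠ 0) {x v : Fin n} (hx : a x = some v) : v = 0 ∨ v = c := by
  by_cases hx0 : x = 0
  · subst hx0
    exact Or.inr (Option.some_injective _ (hx.symm.trans h0))
  by_contra! hv
  have := h 0 x c v h0 hx ((edge_iff 0 x).mpr (by simpa using hx0)) hv.2.symm
  rw [edge_iff] at this
  tauto

lemma IsPwEnd.ncard_pim_le_two {a : Fin n → Option (Fin n)} (h : IsPwEnd a) {c : Fin n}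
    (h0 : a 0 = some c) (hc : c ≠ 0) : (pim a).ncard ≤ 2 := by
  have hsub : pim a ⊆ {0, c} := fun v ⟨x, hx⟩ => h.eq_zero_or_eq h0 hc hx
  exact (Set.ncard_le_ncard hsub).trans (Set.ncard_pair hc.symm).le

lemma IsPwEnd.eq_zero_of_three_le {a : Fin n → Option (Fin n)} (h : IsPwEnd a)
    (hr : 3 ≤ (pim a).ncard) {c : Fin n} (h0 : a 0 = some c) : c = 0 := by
  by_contra hc
  have := h.ncard_pim_le_two h0 hc
  omega

lemma IsPswEnd.eq_zero_of_map_eq_zero {a : Fin n → Option (Fin n)} (h : IsPswEnd a)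
    {x y w : Fin n} (hx : x ≠ 0) (hy : y ≠ 0) (hxa : a x = some 0) (hya : a y = some w) :
    w = 0 := by
  have := h x y 0 w hxa hya
  simp only [edge_iff, hx, hy, false_iff, ne_eq, not_not, false_and, true_iff] at this
  exact this

lemma IsPswEnd.preservesCenter_or_swapsCenter_or_const {a : Fin n → Option (Fin n)}
    (h : IsPswEnd a) :
    PreservesCenter a ∨ SwapsCenter a ∨ ∃ w, ∀ x v, a x = some v → v = w := by
  by_cases hz : ∃ x ≠ 0, a x = some 0
  · obtain ⟨x, hx, hx0⟩ := hz
    have hzero : ∀ y w, y ≠ 0 → a y = some w → w = 0 := fun y w hy hyw =>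
      h.eq_zero_of_map_eq_zero hx hy hx0 hyw
    by_cases h00 : a 0 = some 0
    · refine Or.inr (Or.inr ⟨0, fun y w hyw => ?_⟩)
      by_cases hy : y = 0
      · subst hy
        exact Option.some_injective _ (hyw.symm.trans h00)
      · exact hzero y w hy hyw
    · refine Or.inr (Or.inl fun y w hyw => ?_)
      by_cases hy : y = 0
      · subst hy
        simp only [true_iff]
        rintro rfl
        exact h00 hyw
      · simp [hy, hzero y w hy hyw]
  push Not at hz
  rcases h0 : a 0 with _ | c
  · exact Or.inl (preservesCenter_of_forall_ne_zero (Or.inl h0) hz)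
  by_cases hc : c = 0
  · exact Or.inl (preservesCenter_of_forall_ne_zero (Or.inr (hc ▸ h0)) hz)
  refine Or.inr (Or.inr ⟨c, fun y w hyw => (h.isPwEnd.eq_zero_or_eq h0 hc hyw).resolve_left ?_⟩)
  rintro rfl
  by_cases hy : y = 0
  · subst hy
    exact hc (Option.some_injective _ (h0.symm.trans hyw))
  · exact hz y hy hyw

lemma PTotal.map_zero_of_isPwEnd (hn : 3 ≤ n) {u : Fin n → Option (Fin n)} (ht : PTotal u)
    (hi : PInj u) (hu : IsPwEnd u) : u 0 = some 0 := by
  obtain ⟨c, hc⟩ := ht.exists_eq_some 0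
  have : (pim u).ncard = n := by simp [pim_eq_univ_of_pTotal ht hi]
  rw [hc, hu.eq_zero_of_three_le (by omega) hc]

lemma exists_three_leaves (hn : 4 ≤ n) :
    ∃ a b c : Fin n, a ≠ 0 ∧ b ≠ 0 ∧ c ≠ 0 ∧ a ≠ b ∧ a ≠ c ∧ b ≠ c := by
  refine ⟨⟨1, by omega⟩, ⟨2, by omega⟩, ⟨3, by omega⟩, ?_⟩
  simp only [ne_eq, Fin.ext_iff, Fin.val_zero]
  omega

end Star

section Generators

variable {n : ℕ} [NeZero n]

def fold (c : Fin n) : Fin n → Option (Fin n) := fun y => if y = 0 then some c else some 0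

def edgeSwap (c : Fin n) : Fin n → Option (Fin n) :=
  fun y => if y = 0 then some c else if y = c then some 0 else none

def toCenter : Fin n → Option (Fin n) := fun _ => some 0

lemma preservesCenter_undef (x : Fin n) : PreservesCenter (undef x) := by
  intro y v hy
  by_cases hyx : y = x <;> simp_all [undef]

lemma preservesCenter_collapse {v w : Fin n} (hv : v ≠ 0) (hw : w ≠ 0) :
    PreservesCenter (collapse v w) := by
  intro y u hy
  by_cases hyv : y = v <;> simp_all [collapse]

lemma isPwEnd_collapse_zero (l : Fin n) : IsPwEnd (collapse l 0) := by
  intro u v a b hu hv he hab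
  simp only [collapse, Option.some_inj] at hu hv
  subst hu hv
  rw [edge_iff] at he ⊢
  by_cases hul : u = l <;> by_cases hvl : v = l <;> simp_all [eq_comm (a := (0 : Fin n))]

lemma swapsCenter_fold {c : Fin n} (hc : c ≠ 0) : SwapsCenter (fold c) := by
  intro y v hy
  by_cases hy0 : y = 0 <;> simp_all [fold]

lemma swapsCenter_edgeSwap {c : Fin n} (hc : c ≠ 0) : SwapsCenter (edgeSwap c) := by
  intro y v hy
  by_cases hy0 : y = 0 <;> by_cases hyc : y = c <;> simp_all [edgeSwap]

lemma pInj_edgeSwap (c : Fin n) : PInj (edgeSwap c) := by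
  intro y z v hy hz
  by_cases hy0 : y = 0 <;> by_cases hyc : y = c <;> by_cases hz0 : z = 0 <;>
    by_cases hzc : z = c <;> simp_all [edgeSwap]

lemma isPswEnd_toCenter : IsPswEnd (toCenter : Fin n → Option (Fin n)) := by
  rintro u v a b ⟨⟩ ⟨⟩
  simp [edge_iff]

lemma isPEnd_of_map_zero_eq_none {a : Fin n → Option (Fin n)} (h0 : a 0 = none) : IsPEnd a := by
  intro u v x y hu hv he
  rw [edge_iff] at he
  by_cases hu0 : u = 0
  · simp [hu0, h0] at hu
  · have hv0 : v = 0 := not_not.mp (he.not.mp hu0)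
    simp [hv0, h0] at hv

lemma pInj_pmul_undef_zero_collapse (l : Fin n) : PInj (pmul (undef 0) (collapse l 0)) := by
  intro y z v hy hz
  by_cases hy0 : y = 0 <;> by_cases hz0 : z = 0 <;> by_cases hyl : y = l <;>
    by_cases hzl : z = l <;> simp_all [undef, collapse]

end Generators

section Generation

variable {n : ℕ} [NeZero n] {S : Set (Fin n → Option (Fin n))}

def GeneratesCenterPerms (S : Set (Fin n → Option (Fin n))) : Prop :=
  ∀ σ : Perm (Fin n), σ 0 = 0 → genFrom S (pperm σ)

lemma genFrom_of_conj (hperm : GeneratesCenterPerms S)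
    {a b : Fin n → Option (Fin n)} (ha : genFrom S a) {σ : Perm (Fin n)} (hσ : σ 0 = 0)
    (hb : ∀ x, b x = (a (σ x)).map σ.symm) : genFrom S b := by
  have hσ' : σ⁻¹ 0 = 0 := by rw [Perm.inv_eq_iff_eq, hσ]
  have : b = pmul (pmul (pperm σ) a) (pperm σ⁻¹) := by
    rw [pmul_pperm_left, pmul_pperm_right]
    exact funext hb
  rw [this]
  exact genFrom.mul _ _ (genFrom.mul _ _ (hperm σ hσ) ha) (hperm _ hσ')

lemma genFrom_undef (hperm : GeneratesCenterPerms S) {l : Fin n}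
    (hl : l ≠ 0) (hS : undef l ∈ S) {x : Fin n} (hx : x ≠ 0) : genFrom S (undef x) := by
  refine genFrom_of_conj hperm (genFrom.mem _ hS) (σ := swap x l)
    (swap_apply_of_ne_of_ne hx.symm hl.symm) fun y => ?_
  by_cases hy : y = x
  · subst hy
    simp [undef]
  · have : swap x l y ≠ l := by rwa [Ne, swap_apply_eq_iff, swap_apply_right]
    simp [undef, hy, this]

lemma genFrom_collapse (hperm : GeneratesCenterPerms S) {l₁ l₂ : Fin n} (h₁ : l₁ ≠ 0)
    (h₂ : l₂ ≠ 0) (h₁₂ : l₂ ≠ l₁) (hS : collapse l₂ l₁ ∈ S) {v w : Fin n} (hv : v ≠ 0)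
    (hw : w ≠ 0) (hvw : v ≠ w) : genFrom S (collapse v w) := by
  obtain ⟨σ, hσv, hσw, hσ0⟩ := Perm.exists_apply_eq_pair hvw h₁₂ hv hw h₂ h₁
  refine genFrom_of_conj hperm (genFrom.mem _ hS) hσ0 fun y => ?_
  by_cases hy : y = v
  · subst hy
    simp [collapse, hσv, ← hσw]
  · have : σ y ≠ l₂ := by rwa [← hσv, σ.injective.ne_iff]
    simp [collapse, hy, this]

lemma genFrom_fold (hperm : GeneratesCenterPerms S) {l : Fin n}
    (hl : l ≠ 0) (hS : fold l ∈ S) {c : Fin n} (hc : c ≠ 0) : genFrom S (fold c) := by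
  refine genFrom_of_conj hperm (genFrom.mem _ hS) (σ := swap c l)
    (swap_apply_of_ne_of_ne hc.symm hl.symm) fun y => ?_
  by_cases hy : y = 0
  · subst hy
    simp [fold, swap_apply_of_ne_of_ne hc.symm hl.symm]
  · have : swap c l y ≠ 0 := by
      rwa [← swap_apply_of_ne_of_ne hc.symm hl.symm, (swap c l).injective.ne_iff]
    simp [fold, hy, this, swap_apply_of_ne_of_ne hc.symm hl.symm]

lemma genFrom_edgeSwap (hperm : GeneratesCenterPerms S)
    {l : Fin n} (hl : l ≠ 0) (hS : edgeSwap l ∈ S) {c : Fin n} (hc : c ≠ 0) :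
    genFrom S (edgeSwap c) := by
  have h0 : swap c l 0 = 0 := swap_apply_of_ne_of_ne hc.symm hl.symm
  refine genFrom_of_conj hperm (genFrom.mem _ hS) h0 fun y => ?_
  by_cases hy : y = 0
  · subst hy
    simp [edgeSwap, h0]
  · have hy' : swap c l y ≠ 0 := by rwa [← h0, (swap c l).injective.ne_iff]
    by_cases hyc : y = c
    · subst hyc
      simp [edgeSwap, hy, hl, h0]
    · have : swap c l y ≠ l := by rwa [Ne, swap_apply_eq_iff, swap_apply_right]
      simp [edgeSwap, hy, hyc, hy', this]

/-- Induction on the number of points missed by `f`: if `f i = f j` with `i ≠ j`, send `i` to a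
missed point `v` instead, then collapse `v` onto `f i`. -/
lemma genFrom_of_total (hperm : GeneratesCenterPerms S)
    (hcol : ∀ v w : Fin n, v ≠ 0 → w ≠ 0 → v ≠ w → genFrom S (collapse v w))
    (f : Fin n → Fin n) (hf : ∀ x, f x = 0 ↔ x = 0) : genFrom S fun x => some (f x) := by
  induction h : (Set.range f)ᶜ.ncard using Nat.strong_induction_on generalizing f with
  | _ k ih =>
  by_cases hinj : Function.Injective f
  · exact hperm (Equiv.ofBijective f hinj.bijective_of_finite) ((hf 0).mpr rfl)
  obtain ⟨i, j, hij, hne⟩ := Function.not_injective_iff.mp hinj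
  obtain ⟨v, hv⟩ : ∃ v, v ∉ Set.range f := by
    by_contra! hsurj
    exact hinj (Finite.injective_iff_surjective.mpr hsurj)
  have hv0 : v ≠ 0 := fun h => hv ⟨0, h ▸ (hf 0).mpr rfl⟩
  have hi0 : i ≠ 0 := fun hi => hne (hi.trans ((hf j).mp (hij ▸ (hf i).mpr hi)).symm)
  set f' := Function.update f i v
  have hf' : ∀ x, f' x = 0 ↔ x = 0 := by
    intro x
    by_cases hx : x = i
    · subst hx
      simp [f', hv0, hi0]
    · simp [f', hx, hf]
  have hrange : Set.range f ⊂ Set.range f' := by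
    refine Set.ssubset_iff_of_subset ?_ |>.mpr ⟨v, ⟨i, by simp [f']⟩, hv⟩
    rintro _ ⟨x, rfl⟩
    by_cases hx : x = i
    · subst hx
      exact ⟨j, by simp [f', hne.symm, hij]⟩
    · exact ⟨x, by simp [f', hx]⟩
  have hlt : (Set.range f')ᶜ.ncard < k :=
    h ▸ Set.ncard_lt_ncard (compl_lt_compl_iff_lt.mpr hrange)
  convert genFrom.mul _ _ (ih _ hlt f' hf' rfl)
    (hcol v (f i) hv0 ((hf i).not.mpr hi0) fun h => hv ⟨i, h.symm⟩) using 1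
  funext x
  by_cases hx : x = i
  · subst hx
    simp [f', collapse]
  · have : f x ≠ v := fun h => hv ⟨x, h⟩
    simp [f', collapse, hx, this]

lemma genFrom_of_preservesCenter (hperm : GeneratesCenterPerms S)
    (hundef : ∀ x, genFrom S (undef x))
    (hcol : ∀ v w : Fin n, v ≠ 0 → w ≠ 0 → v ≠ w → genFrom S (collapse v w))
    {a : Fin n → Option (Fin n)} (ha : PreservesCenter a) : genFrom S a := by
  have : a = pmul (pdomId a) fun x => some ((a x).getD x) := by
    funext x
    cases h : a x <;> simp [pdomId, h]
  rw [this]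
  refine genFrom.mul _ _ (genFrom_pdomId hundef a) (genFrom_of_total hperm hcol _ fun x => ?_)
  cases h : a x with
  | none => simp
  | some v => simpa using (ha x v h).symm

lemma genFrom_of_preservesCenter_of_pInj
    (hperm : GeneratesCenterPerms S)
    (hundef : ∀ x, genFrom S (undef x)) {a : Fin n → Option (Fin n)} (ha : PreservesCenter a)
    (hi : PInj a) : genFrom S a := by
  set a' := Function.update a 0 (some 0)
  have ha' : ∀ x v, a x = some v → a' x = some v := by
    intro x v hx
    by_cases hx0 : x = 0
    · subst hx0
      simp [a', ← (ha 0 v hx).mp rfl]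
    · simp [a', hx0, hx]
  have hi' : PInj a' := by
    have hleaf : ∀ y v, y ≠ 0 → a' y = some v → v ≠ 0 := fun y v hy h =>
      (ha y v (by simpa [a', hy] using h)).not.mp hy
    intro x y v hx hy
    by_cases hx0 : x = 0 <;> by_cases hy0 : y = 0
    · exact hx0.trans hy0.symm
    · subst hx0
      exact absurd (Option.some_injective _ (by simpa [a'] using hx)).symm (hleaf y v hy0 hy)
    · subst hy0
      exact absurd (Option.some_injective _ (by simpa [a'] using hy)).symm (hleaf x v hx0 hx)
    · exact hi x y v (by simpa [a', hx0] using hx) (by simpa [a', hy0] using hy)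
  obtain ⟨σ, hσ⟩ := hi'.exists_perm
  have : a = pmul (pdomId a) (pperm σ) := by
    funext x
    cases h : a x with
    | none => simp [pdomId, h]
    | some v => simp [pdomId, h, hσ x v (ha' x v h)]
  rw [this]
  exact genFrom.mul _ _ (genFrom_pdomId hundef a) (hperm σ (hσ 0 0 (by simp [a'])))

lemma forall_genFrom_of_preservesCenter (hperm : GeneratesCenterPerms S) {l₁ l₂ : Fin n}
    (h₁ : l₁ ≠ 0) (h₂ : l₂ ≠ 0) (h₁₂ : l₂ ≠ l₁) (hu : undef l₁ ∈ S) (hu0 : undef 0 ∈ S)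
    (hcol : collapse l₂ l₁ ∈ S) (a : Fin n → Option (Fin n)) (ha : PreservesCenter a) :
    genFrom S a := by
  refine genFrom_of_preservesCenter hperm (fun x => ?_)
    (fun v w hv hw hvw => genFrom_collapse hperm h₁ h₂ h₁₂ hcol hv hw hvw) ha
  by_cases hx : x = 0
  · exact hx ▸ genFrom.mem _ hu0
  · exact genFrom_undef hperm h₁ hu hx

lemma forall_genFrom_of_preservesCenter_of_pInj
    (hperm : GeneratesCenterPerms S) {l : Fin n} (hl : l ≠ 0)
    (hu : undef l ∈ S) (hu0 : undef 0 ∈ S) (a : Fin n → Option (Fin n))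
    (ha : PreservesCenter a) (hi : PInj a) : genFrom S a := by
  refine genFrom_of_preservesCenter_of_pInj hperm (fun x => ?_) ha hi
  by_cases hx : x = 0
  · exact hx ▸ genFrom.mem _ hu0
  · exact genFrom_undef hperm hl hu hx

lemma SwapsCenter.exists_leaf {a : Fin n → Option (Fin n)} (ha : SwapsCenter a) {l : Fin n}
    (hl : l ≠ 0) : ∃ c ≠ 0, ∀ v, a 0 = some v → v = c := by
  cases h : a 0 with
  | none => exact ⟨l, hl, by simp⟩
  | some c => exact ⟨c, by simpa using ha 0 c h, by simp⟩

lemma SwapsCenter.exists_eq_pmul {a : Fin n → Option (Fin n)} (ha : SwapsCenter a) {c : Fin n}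
    (hc : c ≠ 0) (h0 : ∀ v, a 0 = some v → v = c) {γ : Fin n → Option (Fin n)}
    (hγ0 : γ 0 = some c) (hγc : γ c = some 0) :
    ∃ β, PreservesCenter β ∧ (PInj a → PInj β) ∧ a = pmul β γ := by
  refine ⟨fun x => (a x).map fun _ => if x = 0 then 0 else c, ?_, fun hi x y w hx hy => ?_, ?_⟩
  · intro x w hx
    obtain ⟨v, -, rfl⟩ := Option.map_eq_some_iff.mp hx
    by_cases hx0 : x = 0 <;> simp [hx0, hc]
  · obtain ⟨v, hxv, rfl⟩ := Option.map_eq_some_iff.mp hx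
    obtain ⟨v', hyv, hw⟩ := Option.map_eq_some_iff.mp hy
    by_cases hx0 : x = 0 <;> by_cases hy0 : y = 0
    · exact hx0.trans hy0.symm
    · exact (hc (by simpa [hx0, hy0] using hw)).elim
    · exact (hc (by simpa [hx0, hy0] using hw.symm)).elim
    · have hv : v = 0 := by simpa [hx0] using ha x v hxv
      have hv' : v' = 0 := by simpa [hy0] using ha y v' hyv
      exact hi x y 0 (hv ▸ hxv) (hv' ▸ hyv)
  · funext x
    by_cases hx0 : x = 0
    · subst hx0
      cases h : a 0 with
      | none => simp [h]
      | some v => simp [h, h0 v h, hγ0]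
    · cases h : a x with
      | none => simp [h]
      | some v =>
        obtain rfl : v = 0 := by simpa [hx0] using ha x v h
        simp [h, hx0, hγc]

lemma genFrom_of_swapsCenter (hpres : ∀ β, PreservesCenter β → genFrom S β)
    (hfold : ∀ c ≠ 0, genFrom S (fold c)) {l : Fin n} (hl : l ≠ 0)
    {a : Fin n → Option (Fin n)} (ha : SwapsCenter a) : genFrom S a := by
  obtain ⟨c, hc, h0⟩ := ha.exists_leaf hl
  obtain ⟨β, hβ, -, rfl⟩ := ha.exists_eq_pmul hc h0 (γ := fold c) (by simp [fold])
    (by simp [fold, hc])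
  exact genFrom.mul _ _ (hpres β hβ) (hfold c hc)

lemma exists_ne_zero_not_mem_pim {a : Fin n → Option (Fin n)} (hz : ∃ x ≠ 0, a x = some 0)
    (h : ¬ (PTotal a ∧ PInj a)) : ∃ w ≠ 0, w ∉ pim a := by
  by_contra! hw
  refine h (pTotal_and_pInj_of_pim_eq_univ (Set.eq_univ_of_forall fun w => ?_))
  obtain ⟨x, -, hx⟩ := hz
  by_cases hw0 : w = 0
  · exact ⟨x, hw0 ▸ hx⟩
  · exact hw w hw0

def redirect (a : Fin n → Option (Fin n)) (l : Fin n) : Fin n → Option (Fin n) :=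
  fun x => if x = 0 then some 0 else (a x).map fun v => if v = 0 then l else v

lemma redirect_eq_some {a : Fin n → Option (Fin n)} {l x u : Fin n} (hx : x ≠ 0) :
    redirect a l x = some u ↔ ∃ v, a x = some v ∧ (if v = 0 then l else v) = u := by
  simp [redirect, hx]

lemma preservesCenter_redirect (a : Fin n → Option (Fin n)) {l : Fin n} (hl : l ≠ 0) :
    PreservesCenter (redirect a l) := by
  intro x u hx
  by_cases hx0 : x = 0
  · simp_all [redirect]
  · obtain ⟨v, -, rfl⟩ := (redirect_eq_some hx0).mp hx
    by_cases hv : v = 0 <;> simp [hx0, hv, hl]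

lemma PInj.redirect {a : Fin n → Option (Fin n)} (hi : PInj a) {l : Fin n} (hl : l ≠ 0)
    (hla : l ∉ pim a) : PInj (redirect a l) := by
  have hleaf := preservesCenter_redirect a hl
  intro x y u hx hy
  by_cases hx0 : x = 0 <;> by_cases hy0 : y = 0
  · exact hx0.trans hy0.symm
  · exact absurd ((hleaf x u hx).mp hx0) ((hleaf y u hy).not.mp hy0)
  · exact absurd ((hleaf y u hy).mp hy0) ((hleaf x u hx).not.mp hx0)
  obtain ⟨v, hv, rfl⟩ := (redirect_eq_some hx0).mp hx
  obtain ⟨v', hv', hvv'⟩ := (redirect_eq_some hy0).mp hy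
  refine hi x y v hv (hv'.trans ?_)
  by_cases h : v = 0 <;> by_cases h' : v' = 0 <;> simp only [h, h', if_true, if_false] at hvv'
  · rw [h, h']
  · exact absurd ⟨y, hvv' ▸ hv'⟩ hla
  · exact absurd ⟨x, hvv' ▸ hv⟩ hla
  · rw [hvv']

lemma eq_pmul_redirect {a : Fin n → Option (Fin n)} (h0 : a 0 = none ∨ a 0 = some 0)
    {l : Fin n} (hla : l ∉ pim a) {ω : Fin n → Option (Fin n)} (hω0 : ω 0 = a 0)
    (hωl : ω l = some 0) (hω : ∀ y, y ≠ 0 → y ≠ l → ω y = some y) :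
    a = pmul (redirect a l) ω := by
  funext x
  by_cases hx0 : x = 0
  · subst hx0
    rcases h0 with h0 | h0 <;> simp [redirect, hω0, h0]
  · cases h : a x with
    | none => simp [redirect, hx0, h]
    | some v =>
      by_cases hv : v = 0
      · simp [redirect, hx0, h, hv, hωl]
      · have hvl : v ≠ l := fun hvl => hla ⟨x, hvl ▸ h⟩
        simp [redirect, hx0, h, hv, hω v hv hvl]

/-- `a` misses some leaf `w`, so after `swap l w` it misses `l`, and `redirect` can route the
leaves sent to the centre through `l`. -/
lemma genFrom_of_exists_map_eq_zero (hperm : GeneratesCenterPerms S) {l : Fin n} (hl : l ≠ 0)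
    {ω : Fin n → Option (Fin n)} (hωS : genFrom S ω) (hωl : ω l = some 0)
    (hω : ∀ y, y ≠ 0 → y ≠ l → ω y = some y) {a : Fin n → Option (Fin n)}
    (h0 : a 0 = none ∨ a 0 = some 0) (hω0 : ω 0 = a 0) (hz : ∃ x ≠ 0, a x = some 0)
    (hu : ¬ (PTotal a ∧ PInj a))
    (hβ : ∀ β, PreservesCenter β → (PInj a → PInj β) → genFrom S β) : genFrom S a := by
  obtain ⟨w, hw, hwa⟩ := exists_ne_zero_not_mem_pim hz hu
  have hτ0 : swap l w 0 = 0 := swap_apply_of_ne_of_ne hl.symm hw.symm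
  set b := pmul a (pperm (swap l w))
  have hab : a = pmul b (pperm (swap l w)) := by
    rw [pmul_assoc, pmul_pperm_pperm, swap_mul_self]
    exact (pmul_id_right a).symm
  have hb0 : b 0 = a 0 := by rcases h0 with h0 | h0 <;> simp [b, h0, hτ0]
  have hlb : l ∉ pim b := fun ⟨x, hx⟩ => by
    obtain ⟨v, hv, hvl⟩ := pmul_eq_some_iff.mp hx
    rw [pperm_apply, Option.some_inj, swap_apply_eq_iff, swap_apply_left] at hvl
    exact hwa ⟨x, hvl ▸ hv⟩
  rw [hab, eq_pmul_redirect (hb0 ▸ h0) hlb (hω0.trans hb0.symm) hωl hω]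
  exact genFrom.mul _ _ (genFrom.mul _ _ (hβ _ (preservesCenter_redirect b hl)
    fun hi => (hi.pmul (pInj_pperm _)).redirect hl hlb) hωS) (hperm _ hτ0)

lemma eq_pmul_fold {a : Fin n → Option (Fin n)} {c : Fin n} (hc : c ≠ 0)
    (h : ∀ x v, a x = some v → v = 0 ∨ v = c) :
    a = pmul (pmul a (pperm (swap 0 c))) (fold c) := by
  funext x
  cases hx : a x with
  | none => simp [hx]
  | some v => rcases h x v hx with rfl | rfl <;> simp [hx, fold, hc]

lemma eq_pmul_toCenter {a : Fin n → Option (Fin n)} {w : Fin n}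
    (h : ∀ x v, a x = some v → v = w) {δ : Fin n → Option (Fin n)} (hδ : δ 0 = some w) :
    a = pmul (pmul (pdomId a) toCenter) δ := by
  funext x
  cases hx : a x with
  | none => simp [pdomId, hx]
  | some v => simp [pdomId, toCenter, hx, hδ, h x v hx]

lemma eq_pmul_undef_zero {a : Fin n → Option (Fin n)} (h0 : a 0 = none) :
    a = pmul (undef 0) (Function.update a 0 (some 0)) := by
  funext x
  by_cases hx : x = 0
  · subst hx
    simp [undef, h0]
  · simp [undef, hx]

lemma genFrom_of_isPsEnd (hpres : ∀ β, PreservesCenter β → genFrom S β)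
    (hfold : ∀ c ≠ 0, genFrom S (fold c)) {l : Fin n} (hl : l ≠ 0)
    {a : Fin n → Option (Fin n)} (ha : IsPsEnd a) : genFrom S a :=
  ha.preservesCenter_or_swapsCenter.elim (hpres a) (genFrom_of_swapsCenter hpres hfold hl)

lemma genFrom_of_isPswEnd (hpres : ∀ β, PreservesCenter β → genFrom S β)
    (hfold : ∀ c ≠ 0, genFrom S (fold c)) (hz : toCenter ∈ S) {l : Fin n} (hl : l ≠ 0)
    {a : Fin n → Option (Fin n)} (ha : IsPswEnd a) : genFrom S a := by
  obtain hp | hs | ⟨w, hw⟩ := ha.preservesCenter_or_swapsCenter_or_const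
  · exact hpres a hp
  · exact genFrom_of_swapsCenter hpres hfold hl hs
  · have hdom := hpres _ (preservesCenter_pdomId a)
    by_cases hw0 : w = 0
    · rw [eq_pmul_toCenter hw (δ := fun x => some x) (by simp [hw0])]
      exact genFrom.mul _ _ (genFrom.mul _ _ hdom (genFrom.mem _ hz)) genFrom.one
    · rw [eq_pmul_toCenter hw (δ := fold w) (by simp [fold])]
      exact genFrom.mul _ _ (genFrom.mul _ _ hdom (genFrom.mem _ hz)) (hfold w hw0)

lemma genFrom_of_isPEnd (hperm : GeneratesCenterPerms S)
    (hpres : ∀ β, PreservesCenter β → genFrom S β) (hfold : ∀ c ≠ 0, genFrom S (fold c))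
    {l : Fin n} (hl : l ≠ 0) (hdel : pmul (undef 0) (collapse l 0) ∈ S)
    {a : Fin n → Option (Fin n)} (ha : IsPEnd a) : genFrom S a := by
  rcases h0 : a 0 with _ | c
  · by_cases hz : ∃ x ≠ 0, a x = some 0
    · refine genFrom_of_exists_map_eq_zero hperm hl (genFrom.mem _ hdel)
        (by simp [undef, collapse, hl]) (fun y hy hyl => by simp [undef, collapse, hy, hyl])
        (Or.inl h0) (by simp [undef, h0]) hz (fun h => h.1 0 h0) fun β hβ _ => hpres β hβ
    · push Not at hz
      exact hpres a (preservesCenter_of_forall_ne_zero (Or.inl h0) hz)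
  · by_cases hc : c = 0
    · exact hpres a (ha.preservesCenter (hc ▸ h0))
    · exact genFrom_of_swapsCenter hpres hfold hc (ha.swapsCenter h0 hc)

lemma genFrom_of_isPwEnd (hperm : GeneratesCenterPerms S)
    (hpres : ∀ β, PreservesCenter β → genFrom S β) (hfold : ∀ c ≠ 0, genFrom S (fold c))
    {l : Fin n} (hl : l ≠ 0) (hu0 : undef 0 ∈ S) (hcol : collapse l 0 ∈ S)
    {a : Fin n → Option (Fin n)} (ha : IsPwEnd a) : genFrom S a := by
  have hzero : ∀ b : Fin n → Option (Fin n), b 0 = some 0 → genFrom S b := by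
    intro b hb0
    by_cases hz : ∃ x ≠ 0, b x = some 0
    · obtain ⟨x, hx, hbx⟩ := hz
      exact genFrom_of_exists_map_eq_zero hperm hl (genFrom.mem _ hcol) (by simp [collapse])
        (fun y hy hyl => by simp [collapse, hyl]) (Or.inr hb0) (by simp [collapse, hb0, hl.symm])
        ⟨x, hx, hbx⟩ (fun h => hx (h.2 x 0 0 hbx hb0)) fun β hβ _ => hpres β hβ
    · push Not at hz
      exact hpres b (preservesCenter_of_forall_ne_zero (Or.inr hb0) hz)
  rcases h0 : a 0 with _ | c
  · rw [eq_pmul_undef_zero h0]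
    exact genFrom.mul _ _ (genFrom.mem _ hu0) (hzero _ (by simp))
  · by_cases hc : c = 0
    · exact hzero a (hc ▸ h0)
    · rw [eq_pmul_fold (a := a) hc fun x v hx => ha.eq_zero_or_eq h0 hc hx]
      exact genFrom.mul _ _ (hzero _ (by simp [h0])) (hfold c hc)

lemma genFrom_of_pInj_of_isPEnd (hperm : GeneratesCenterPerms S)
    (hpres : ∀ β, PreservesCenter β → PInj β → genFrom S β)
    (hedge : ∀ c ≠ 0, genFrom S (edgeSwap c)) {l : Fin n} (hl : l ≠ 0)
    (hdel : pmul (undef 0) (collapse l 0) ∈ S) {a : Fin n → Option (Fin n)} (hi : PInj a)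
    (ha : IsPEnd a) : genFrom S a := by
  rcases h0 : a 0 with _ | c
  · by_cases hz : ∃ x ≠ 0, a x = some 0
    · refine genFrom_of_exists_map_eq_zero hperm hl (genFrom.mem _ hdel)
        (by simp [undef, collapse, hl]) (fun y hy hyl => by simp [undef, collapse, hy, hyl])
        (Or.inl h0) (by simp [undef, h0]) hz (fun h => h.1 0 h0) fun β hβ hβi =>
          hpres β hβ (hβi hi)
    · push Not at hz
      exact hpres a (preservesCenter_of_forall_ne_zero (Or.inl h0) hz) hi
  · by_cases hc : c = 0
    · exact hpres a (ha.preservesCenter (hc ▸ h0)) hi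
    · have hs := ha.swapsCenter h0 hc
      obtain ⟨c, hc, h0⟩ := hs.exists_leaf hl
      obtain ⟨β, hβ, hβi, hβa⟩ := hs.exists_eq_pmul hc h0 (γ := edgeSwap c)
        (by simp [edgeSwap]) (by simp [edgeSwap, hc])
      rw [hβa]
      exact genFrom.mul _ _ (hpres β hβ (hβi hi)) (hedge c hc)

end Generation

section Classes

variable (n : ℕ) [NeZero n]

def corankOneTotal : Set (Fin n → Option (Fin n)) :=
  {a | PTotal a ∧ ¬ PInj a ∧ a 0 = some 0 ∧ (∀ x, a x = some 0 → x = 0) ∧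
    n - 1 ≤ (pim a).ncard}

def corankOneTotalToCenter : Set (Fin n → Option (Fin n)) :=
  {a | PTotal a ∧ a 0 = some 0 ∧ (∃ x ≠ 0, a x = some 0) ∧ n - 1 ≤ (pim a).ncard}

def corankOnePartial : Set (Fin n → Option (Fin n)) :=
  {a | ¬ PTotal a ∧ a 0 = some 0 ∧ n - 1 ≤ (pim a).ncard}

def corankOneOffCenter : Set (Fin n → Option (Fin n)) :=
  {a | a 0 = none ∧ 0 ∉ pim a ∧ n - 1 ≤ (pim a).ncard}

def corankOneOffCenterToCenter : Set (Fin n → Option (Fin n)) :=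
  {a | a 0 = none ∧ 0 ∈ pim a ∧ n - 1 ≤ (pim a).ncard}

def movesCenter : Set (Fin n → Option (Fin n)) := {a | ∃ c ≠ 0, a 0 = some c}

def movesCenterToCenter : Set (Fin n → Option (Fin n)) :=
  {a | (∃ c ≠ 0, a 0 = some c) ∧ 0 ∈ pim a}

def leafJoinsCenter : Set (Fin n → Option (Fin n)) :=
  {a | ∃ i ≠ 0, ∃ w, a 0 = some w ∧ a i = some w}

variable {n} {b c : Fin n → Option (Fin n)}

lemma id_not_mem_corankOneTotal : (fun x => some x) ∉ corankOneTotal n :=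
  fun h => h.2.1 (pInj_pperm 1)

lemma id_not_mem_corankOneTotalToCenter : (fun x => some x) ∉ corankOneTotalToCenter n :=
  fun ⟨_, _, ⟨_, hx, h⟩, _⟩ => hx (Option.some_injective _ h)

lemma id_not_mem_corankOnePartial : (fun x => some x) ∉ corankOnePartial n :=
  fun h => h.1 fun x => Option.some_ne_none x

lemma id_not_mem_corankOneOffCenter : (fun x => some x) ∉ corankOneOffCenter n :=
  fun h => Option.some_ne_none _ h.1

lemma id_not_mem_corankOneOffCenterToCenter : (fun x => some x) ∉ corankOneOffCenterToCenter n :=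
  fun h => Option.some_ne_none _ h.1

lemma id_not_mem_movesCenter : (fun x => some x) ∉ movesCenter n :=
  fun ⟨_, hc, h⟩ => hc (Option.some_injective _ h).symm

lemma id_not_mem_movesCenterToCenter : (fun x => some x) ∉ movesCenterToCenter n :=
  fun h => id_not_mem_movesCenter h.1

lemma id_not_mem_leafJoinsCenter : (fun x => some x) ∉ leafJoinsCenter n :=
  fun ⟨_, hi, _, h0, h⟩ => hi (Option.some_injective _ (h.trans h0.symm))

lemma mem_or_mem_of_pmul_mem_corankOneTotal (hn : 4 ≤ n) (hb : IsPwEnd b)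
    (h : pmul b c ∈ corankOneTotal n) : b ∈ corankOneTotal n ∨ c ∈ corankOneTotal n := by
  obtain ⟨ht, hni, h0, hz, hr⟩ := h
  have := ncard_pim_pmul_le_left b c
  have := ncard_pim_pmul_le_right b c
  have hbt : PTotal b := fun x hx => ht x (pmul_apply_of_eq_none hx)
  obtain ⟨m, hbm, hcm⟩ := pmul_eq_some_iff.mp h0
  obtain rfl := hb.eq_zero_of_three_le (by omega) hbm
  by_cases hbi : PInj b
  · refine Or.inr ⟨fun y hy => ?_, fun hci => hni (hbi.pmul hci), hcm, fun y hy => ?_,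
      by omega⟩
    · obtain ⟨x, hx⟩ := hbt.surjective hbi y
      exact ht x (by rw [pmul_apply_of_eq_some hx, hy])
    · obtain ⟨x, hx⟩ := hbt.surjective hbi y
      obtain rfl := hz x (by rw [pmul_apply_of_eq_some hx, hy])
      exact Option.some_injective _ (hx.symm.trans hbm)
  · exact Or.inl ⟨hbt, hbi, hbm, fun x hx => hz x (by rw [pmul_apply_of_eq_some hx, hcm]),
      by omega⟩

lemma mem_or_mem_of_pmul_mem_corankOneTotalToCenter (hn : 4 ≤ n) (hb : IsPwEnd b)
    (h : pmul b c ∈ corankOneTotalToCenter n) :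
    b ∈ corankOneTotalToCenter n ∨ c ∈ corankOneTotalToCenter n := by
  obtain ⟨ht, h0, ⟨i, hi, hiz⟩, hr⟩ := h
  have := ncard_pim_pmul_le_left b c
  have := ncard_pim_pmul_le_right b c
  have hbt : PTotal b := fun x hx => ht x (pmul_apply_of_eq_none hx)
  obtain ⟨m, hbm, hcm⟩ := pmul_eq_some_iff.mp h0
  obtain rfl := hb.eq_zero_of_three_le (by omega) hbm
  obtain ⟨k, hbk, hck⟩ := pmul_eq_some_iff.mp hiz
  by_cases hk : k = 0
  · exact Or.inl ⟨hbt, hbm, ⟨i, hi, hk ▸ hbk⟩, by omega⟩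
  · have hlt := ncard_pim_pmul_lt (c := c) ⟨i, hbk⟩
      (Or.inr ⟨0, ⟨0, hbm⟩, Ne.symm hk, hcm.trans hck.symm⟩)
    have huniv : pim b = .univ := pim_eq_univ_of_le_ncard (by simp; omega)
    refine Or.inr ⟨fun y hy => ?_, hcm, ⟨k, hk, hck⟩, by omega⟩
    obtain ⟨x, hx⟩ : y ∈ pim b := huniv ▸ Set.mem_univ y
    exact ht x (by rw [pmul_apply_of_eq_some hx, hy])

lemma mem_or_mem_of_pmul_mem_corankOnePartial (hn : 4 ≤ n) (hb : IsPwEnd b)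
    (h : pmul b c ∈ corankOnePartial n) :
    b ∈ corankOnePartial n ∨ c ∈ corankOnePartial n := by
  obtain ⟨hnt, h0, hr⟩ := h
  have := ncard_pim_pmul_le_left b c
  have := ncard_pim_pmul_le_right b c
  obtain ⟨m, hbm, hcm⟩ := pmul_eq_some_iff.mp h0
  obtain rfl := hb.eq_zero_of_three_le (by omega) hbm
  by_cases hbt : PTotal b
  · refine Or.inr ⟨fun hct => hnt fun x => ?_, hcm, by omega⟩
    obtain ⟨y, hy⟩ := hbt.exists_eq_some x
    rw [pmul_apply_of_eq_some hy]
    exact hct y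
  · exact Or.inl ⟨hbt, hbm, by omega⟩

lemma mem_or_mem_of_pmul_mem_corankOneOffCenter (hn : 4 ≤ n) (hb : IsPwEnd b) (hc : IsPwEnd c)
    (h : pmul b c ∈ corankOneOffCenter n) :
    b ∈ corankOneOffCenter n ∨ c ∈ corankOneOffCenter n := by
  obtain ⟨h0, hz, hr⟩ := h
  have := ncard_pim_pmul_le_left b c
  have := ncard_pim_pmul_le_right b c
  rcases hb0 : b 0 with _ | m
  · refine Or.inl ⟨hb0, fun ⟨x, hx⟩ => ?_, by omega⟩
    have hbn := ncard_pim_lt_of_not_pTotal (a := b) fun ht => ht 0 hb0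
    rcases hc0 : c 0 with _ | w
    · have := ncard_pim_pmul_lt ⟨x, hx⟩ (Or.inl hc0)
      simp at hbn
      omega
    · obtain rfl := hc.eq_zero_of_three_le (by omega) hc0
      exact hz ⟨x, by rw [pmul_apply_of_eq_some hx, hc0]⟩
  · obtain rfl := hb.eq_zero_of_three_le (by omega) hb0
    have hc0 : c 0 = none := by rwa [pmul_apply_of_eq_some hb0] at h0
    have hlt := ncard_pim_pmul_lt ⟨0, hb0⟩ (Or.inl hc0)
    have huniv : pim b = .univ := pim_eq_univ_of_le_ncard (by simp; omega)
    refine Or.inr ⟨hc0, fun ⟨y, hy⟩ => ?_, by omega⟩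
    obtain ⟨x, hx⟩ : y ∈ pim b := huniv ▸ Set.mem_univ y
    exact hz ⟨x, by rw [pmul_apply_of_eq_some hx, hy]⟩

lemma mem_or_mem_of_pmul_mem_corankOneOffCenterToCenter (hn : 4 ≤ n) (hb : IsPwEnd b)
    (hc : IsPEnd c) (h : pmul b c ∈ corankOneOffCenterToCenter n) :
    b ∈ corankOneOffCenterToCenter n ∨ c ∈ corankOneOffCenterToCenter n := by
  obtain ⟨h0, ⟨x, hx⟩, hr⟩ := h
  have := ncard_pim_pmul_le_left b c
  have := ncard_pim_pmul_le_right b c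
  obtain ⟨k, hbk, hck⟩ := pmul_eq_some_iff.mp hx
  rcases hb0 : b 0 with _ | m
  · by_cases hb0' : 0 ∈ pim b
    · exact Or.inl ⟨hb0, hb0', by omega⟩
    refine Or.inr ⟨?_, ⟨k, hck⟩, by omega⟩
    rcases hc0 : c 0 with _ | w
    · rfl
    obtain rfl := hc.isPwEnd.eq_zero_of_three_le (by omega) hc0
    have hk : k = 0 := ((hc.preservesCenter hc0) k 0 hck).mpr rfl
    exact absurd ⟨x, hk ▸ hbk⟩ hb0'
  · obtain rfl := hb.eq_zero_of_three_le (by omega) hb0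
    exact Or.inr ⟨by rwa [pmul_apply_of_eq_some hb0] at h0, ⟨k, hck⟩, by omega⟩

lemma mem_or_mem_of_pmul_mem_movesCenter (h : pmul b c ∈ movesCenter n) :
    b ∈ movesCenter n ∨ c ∈ movesCenter n := by
  obtain ⟨u, hu, h0⟩ := h
  obtain ⟨m, hbm, hcm⟩ := pmul_eq_some_iff.mp h0
  by_cases hm : m = 0
  · exact Or.inr ⟨u, hu, hm ▸ hcm⟩
  · exact Or.inl ⟨m, hm, hbm⟩

lemma mem_or_mem_of_pmul_mem_movesCenterToCenter (hb : IsPwEnd b)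
    (h : pmul b c ∈ movesCenterToCenter n) :
    b ∈ movesCenterToCenter n ∨ c ∈ movesCenterToCenter n := by
  obtain ⟨⟨u, hu, h0⟩, ⟨x, hx⟩⟩ := h
  obtain ⟨m, hbm, hcm⟩ := pmul_eq_some_iff.mp h0
  obtain ⟨k, hbk, hck⟩ := pmul_eq_some_iff.mp hx
  by_cases hm : m = 0
  · subst hm
    exact Or.inr ⟨⟨u, hu, hcm⟩, ⟨k, hck⟩⟩
  rcases hb.eq_zero_or_eq hbm hm hbk with rfl | rfl
  · exact Or.inl ⟨⟨m, hm, hbm⟩, ⟨x, hbk⟩⟩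
  · exact absurd (Option.some_injective _ (hcm.symm.trans hck)) hu

lemma mem_or_mem_of_pmul_mem_leafJoinsCenter (hb : IsPwEnd b) (h : pmul b c ∈ leafJoinsCenter n) :
    b ∈ leafJoinsCenter n ∨ c ∈ leafJoinsCenter n := by
  obtain ⟨i, hi, w, h0, hiw⟩ := h
  obtain ⟨m, hbm, hcm⟩ := pmul_eq_some_iff.mp h0
  obtain ⟨k, hbk, hck⟩ := pmul_eq_some_iff.mp hiw
  by_cases hmk : m = k
  · exact Or.inl ⟨i, hi, m, hbm, hmk ▸ hbk⟩
  by_cases hm : m = 0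
  · subst hm
    exact Or.inr ⟨k, Ne.symm hmk, w, hcm, hck⟩
  by_cases hk : k = 0
  · subst hk
    exact Or.inr ⟨m, hm, w, hck, hcm⟩
  exact ((hb.eq_zero_or_eq hbm hm hbk).resolve_left hk |> Ne.symm hmk |>.elim)

lemma IsPswEnd.ncard_pim_le_two_of_mem_leafJoinsCenter {a : Fin n → Option (Fin n)} (h : IsPswEnd a)
    (ha : a ∈ leafJoinsCenter n) : (pim a).ncard ≤ 2 := by
  obtain ⟨i, hi, w, h0, hiw⟩ := ha
  by_cases hw : w = 0
  · subst hw
    have hsub : pim a ⊆ {0} := by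
      rintro v ⟨x, hx⟩
      by_cases hx0 : x = 0
      · subst hx0
        exact (Option.some_injective _ (hx.symm.trans h0))
      · exact h.eq_zero_of_map_eq_zero hi hx0 hiw hx
    exact (Set.ncard_le_ncard hsub).trans (by simp)
  · exact h.isPwEnd.ncard_pim_le_two h0 hw

lemma IsPswEnd.not_mem_leafJoinsCenter {a : Fin n → Option (Fin n)} (h : IsPswEnd a)
    (ha : a ∈ movesCenterToCenter n) : a ∉ leafJoinsCenter n := by
  rintro ⟨i, hi, w, h0, hiw⟩
  obtain ⟨⟨c, hc, h0'⟩, x, hx⟩ := ha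
  obtain rfl : w = c := Option.some_injective _ (h0.symm.trans h0')
  have hx0 : x ≠ 0 := by
    rintro rfl
    exact hc (Option.some_injective _ (h0'.symm.trans hx))
  exact hc (h.eq_zero_of_map_eq_zero hx0 hi hx hiw)

variable {l : Fin n}

lemma collapse_mem_corankOneTotal {v w : Fin n} (hv : v ≠ 0) (hw : w ≠ 0) (hvw : v ≠ w) :
    collapse v w ∈ corankOneTotal n := by
  refine ⟨fun y => by simp [collapse], fun h => hvw (h v w w (by simp [collapse])
    (by simp [collapse, hvw.symm])), by simp [collapse, hv.symm], fun y hy => ?_,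
    le_ncard_pim_of_forall_ne v fun y hy => ⟨y, by simp [collapse, hy]⟩⟩
  by_cases hyv : y = v <;> simp_all [collapse]

lemma collapse_mem_corankOneTotalToCenter (hl : l ≠ 0) :
    collapse l 0 ∈ corankOneTotalToCenter n :=
  ⟨fun y => by simp [collapse], by simp [collapse], ⟨l, hl, by simp [collapse]⟩,
    le_ncard_pim_of_forall_ne l fun y hy => ⟨y, by simp [collapse, hy]⟩⟩

lemma undef_mem_corankOnePartial (hl : l ≠ 0) : undef l ∈ corankOnePartial n :=
  ⟨fun h => h l (by simp [undef]), by simp [undef, hl.symm],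
    le_ncard_pim_of_forall_ne l fun y hy => ⟨y, by simp [undef, hy]⟩⟩

lemma undef_zero_mem_corankOneOffCenter : undef 0 ∈ corankOneOffCenter n :=
  ⟨by simp [undef], fun ⟨y, hy⟩ => by by_cases h : y = 0 <;> simp_all [undef],
    le_ncard_pim_of_forall_ne 0 fun y hy => ⟨y, by simp [undef, hy]⟩⟩

lemma pmul_undef_zero_collapse_mem_corankOneOffCenterToCenter (hl : l ≠ 0) :
    pmul (undef 0) (collapse l 0) ∈ corankOneOffCenterToCenter n := by
  refine ⟨by simp [undef], ⟨l, by simp [undef, collapse, hl]⟩,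
    le_ncard_pim_of_forall_ne l fun y hy => ?_⟩
  by_cases hy0 : y = 0
  · exact ⟨l, by simp [undef, collapse, hl, hy0]⟩
  · exact ⟨y, by simp [undef, collapse, hy0, hy]⟩

lemma fold_mem_movesCenterToCenter {c : Fin n} (hc : c ≠ 0) : fold c ∈ movesCenterToCenter n :=
  ⟨⟨c, hc, by simp [fold]⟩, ⟨c, by simp [fold, hc]⟩⟩

lemma toCenter_mem_leafJoinsCenter (hl : l ≠ 0) : toCenter ∈ leafJoinsCenter n :=
  ⟨l, hl, 0, rfl, rfl⟩

end Classes

section LowerBounds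

variable {n : ℕ} [NeZero n] {S M : Set (Fin n → Option (Fin n))}

lemma exists_units_of_genFrom (hn : 4 ≤ n) (hperm : GeneratesCenterPerms S) :
    ∃ u ∈ S, ∃ u' ∈ S, u ≠ u' ∧ (PTotal u ∧ PInj u) ∧ (PTotal u' ∧ PInj u') := by
  obtain ⟨a, b, c, ha, hb, hc, hab, hac, hbc⟩ := exists_three_leaves hn
  refine exists_units_ne_of_genFrom (hperm (swap a b) (swap_apply_of_ne_of_ne ha.symm hb.symm))
    (hperm (swap a c) (swap_apply_of_ne_of_ne ha.symm hc.symm)) ⟨pTotal_pperm _, pInj_pperm _⟩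
    ⟨pTotal_pperm _, pInj_pperm _⟩ fun h => hbc ?_
  simpa [pmul_pperm_pperm, swap_apply_of_ne_of_ne hab.symm hbc, swap_apply_of_ne_of_ne hac.symm
    hbc.symm] using congrFun h a

lemma exists_units_partial_offCenter (hn : 4 ≤ n) (hgen : {a | genFrom S a} = M)
    (hM : ∀ a ∈ M, IsPwEnd a) (hperm : ∀ σ : Perm (Fin n), σ 0 = 0 → pperm σ ∈ M)
    (hundef : ∀ x, undef x ∈ M) :
    ∃ u ∈ S, ∃ u' ∈ S, ∃ e ∈ S, ∃ d ∈ S, u ≠ u' ∧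
      (PTotal u ∧ PInj u ∧ u 0 = some 0) ∧
      (PTotal u' ∧ PInj u' ∧ u' 0 = some 0) ∧ e ∈ corankOnePartial n ∧
      d ∈ corankOneOffCenter n := by
  have hSM : ∀ s ∈ S, s ∈ M := fun s hs =>
    (genFrom_iff_of_setOf_eq hgen).mp (genFrom.mem s hs)
  obtain ⟨l, -, -, hl, -⟩ := exists_three_leaves hn
  obtain ⟨u, hu, u', hu', huu', ⟨hut, hui⟩, ⟨hut', hui'⟩⟩ :=
    exists_units_of_genFrom hn fun σ hσ => (genFrom_iff_of_setOf_eq hgen).mpr (hperm σ hσ)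
  obtain ⟨e, he, heC⟩ := exists_mem_of_setOf_genFrom_eq hgen (hundef l)
    (undef_mem_corankOnePartial hl) id_not_mem_corankOnePartial
    fun b hb c _ h => mem_or_mem_of_pmul_mem_corankOnePartial hn (hM b hb) h
  obtain ⟨d, hd, hdC⟩ := exists_mem_of_setOf_genFrom_eq hgen (hundef 0)
    undef_zero_mem_corankOneOffCenter id_not_mem_corankOneOffCenter
    fun b hb c hc h => mem_or_mem_of_pmul_mem_corankOneOffCenter hn (hM b hb) (hM c hc) h
  exact ⟨u, hu, u', hu', e, he, d, hd, huu',
    ⟨hut, hui, hut.map_zero_of_isPwEnd (by omega) hui (hM u (hSM u hu))⟩,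
    ⟨hut', hui', hut'.map_zero_of_isPwEnd (by omega) hui' (hM u' (hSM u' hu'))⟩, heC, hdC⟩

lemma six_le_ncard_of_psEndS (hn : 4 ≤ n) (hS : S.Finite) (hgen : {a | genFrom S a} = PsEndS n) :
    6 ≤ S.ncard := by
  have hM : ∀ a ∈ PsEndS n, IsPwEnd a := fun a ha => IsPsEnd.isPswEnd ha |>.isPwEnd
  obtain ⟨u, hu, u', hu', e, he, d, hd, huu', ⟨hut, hui, hu0⟩, ⟨hut', hui', hu0'⟩,
    ⟨het, he0, -⟩, ⟨hd0, -⟩⟩ := exists_units_partial_offCenter hn hgen hM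
      (fun σ hσ => (preservesCenter_pperm hσ).isPsEnd) fun x => (preservesCenter_undef x).isPsEnd
  obtain ⟨l₁, l₂, -, h₁, h₂, -, h₁₂, -, -⟩ := exists_three_leaves hn
  obtain ⟨t, ht, htt, hti, ht0, -⟩ := exists_mem_of_setOf_genFrom_eq hgen
    (preservesCenter_collapse h₂ h₁).isPsEnd
    (collapse_mem_corankOneTotal h₂ h₁ h₁₂.symm)
    id_not_mem_corankOneTotal fun b hb c _ h => mem_or_mem_of_pmul_mem_corankOneTotal hn (hM b hb) h
  obtain ⟨m, hm, c, hc, hm0⟩ := exists_mem_of_setOf_genFrom_eq hgen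
    (swapsCenter_fold h₁).isPsEnd (fold_mem_movesCenterToCenter h₁).1
    id_not_mem_movesCenter fun b _ c _ h => mem_or_mem_of_pmul_mem_movesCenter h
  -- The chosen elements differ in totality, injectivity, value at the centre or rank.
  refine List.Nodup.length_le_ncard (l := [u, u', e, d, t, m]) ?_ hS (by simp [*])
  simp only [List.nodup_cons, List.mem_cons, List.not_mem_nil, not_or, List.nodup_nil]
  and_intros
  all_goals first | trivial | (rintro rfl; simp_all)

lemma seven_le_ncard_of_pswEndS (hn : 4 ≤ n) (hS : S.Finite)
    (hgen : {a | genFrom S a} = PswEndS n) : 7 ≤ S.ncard := by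
  have hM : ∀ a ∈ PswEndS n, IsPwEnd a := fun a ha => IsPswEnd.isPwEnd ha
  obtain ⟨u, hu, u', hu', e, he, d, hd, huu', ⟨hut, hui, hu0⟩, ⟨hut', hui', hu0'⟩,
    ⟨het, he0, her⟩, ⟨hd0, -⟩⟩ := exists_units_partial_offCenter hn hgen hM
      (fun σ hσ => (preservesCenter_pperm hσ).isPsEnd.isPswEnd)
      fun x => (preservesCenter_undef x).isPsEnd.isPswEnd
  obtain ⟨l₁, l₂, -, h₁, h₂, -, h₁₂, -, -⟩ := exists_three_leaves hn
  obtain ⟨t, ht, htt, hti, ht0, htz, -⟩ := exists_mem_of_setOf_genFrom_eq hgen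
    (preservesCenter_collapse h₂ h₁).isPsEnd.isPswEnd
    (collapse_mem_corankOneTotal h₂ h₁ h₁₂.symm)
    id_not_mem_corankOneTotal fun b hb c _ h => mem_or_mem_of_pmul_mem_corankOneTotal hn (hM b hb) h
  obtain ⟨m, hm, ⟨c, hc, hm0⟩, x, hx⟩ := exists_mem_of_setOf_genFrom_eq hgen
    (swapsCenter_fold h₁).isPsEnd.isPswEnd (fold_mem_movesCenterToCenter h₁)
    id_not_mem_movesCenterToCenter fun b hb c _ h =>
      mem_or_mem_of_pmul_mem_movesCenterToCenter (hM b hb) h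
  obtain ⟨j, hjS, i, hi, w, hj0, hji⟩ := exists_mem_of_setOf_genFrom_eq hgen
    isPswEnd_toCenter (toCenter_mem_leafJoinsCenter h₁)
    id_not_mem_leafJoinsCenter fun b hb c _ h => mem_or_mem_of_pmul_mem_leafJoinsCenter (hM b hb) h
  have hjr := IsPswEnd.ncard_pim_le_two_of_mem_leafJoinsCenter
    ((genFrom_iff_of_setOf_eq hgen).mp (genFrom.mem j hjS)) ⟨i, hi, w, hj0, hji⟩
  have hmj : m ≠ j := fun h => IsPswEnd.not_mem_leafJoinsCenter
    ((genFrom_iff_of_setOf_eq hgen).mp (genFrom.mem m hm)) ⟨⟨c, hc, hm0⟩, x, hx⟩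
    (h ▸ ⟨i, hi, w, hj0, hji⟩)
  have hji' : ¬ PInj j := fun hj => hi (hj i 0 w hji hj0)
  refine List.Nodup.length_le_ncard (l := [u, u', e, d, t, m, j]) ?_ hS (by simp [*])
  simp only [List.nodup_cons, List.mem_cons, List.not_mem_nil, not_or, List.nodup_nil]
  and_intros
  all_goals first | trivial | (rintro rfl; first | omega | simp_all)

lemma seven_le_ncard_of_pEndS (hn : 4 ≤ n) (hS : S.Finite) (hgen : {a | genFrom S a} = PEndS n) :
    7 ≤ S.ncard := by
  have hM : ∀ a ∈ PEndS n, IsPwEnd a := fun a ha => IsPEnd.isPwEnd ha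
  obtain ⟨u, hu, u', hu', e, he, d, hd, huu', ⟨hut, hui, hu0⟩, ⟨hut', hui', hu0'⟩,
    ⟨het, he0, -⟩, ⟨hd0, hdz, -⟩⟩ := exists_units_partial_offCenter hn hgen hM
      (fun σ hσ => (preservesCenter_pperm hσ).isPsEnd.isPEnd)
      fun x => (preservesCenter_undef x).isPsEnd.isPEnd
  obtain ⟨l₁, l₂, -, h₁, h₂, -, h₁₂, -, -⟩ := exists_three_leaves hn
  obtain ⟨t, ht, htt, hti, ht0, -⟩ := exists_mem_of_setOf_genFrom_eq hgen
    (preservesCenter_collapse h₂ h₁).isPsEnd.isPEnd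
    (collapse_mem_corankOneTotal h₂ h₁ h₁₂.symm)
    id_not_mem_corankOneTotal fun b hb c _ h => mem_or_mem_of_pmul_mem_corankOneTotal hn (hM b hb) h
  obtain ⟨z, hz, hz0, hzz, -⟩ := exists_mem_of_setOf_genFrom_eq hgen
    (isPEnd_of_map_zero_eq_none (by simp [undef]))
    (pmul_undef_zero_collapse_mem_corankOneOffCenterToCenter h₁)
    id_not_mem_corankOneOffCenterToCenter fun b hb c hc h =>
      mem_or_mem_of_pmul_mem_corankOneOffCenterToCenter hn (hM b hb) hc h
  obtain ⟨m, hm, c, hc, hm0⟩ := exists_mem_of_setOf_genFrom_eq hgen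
    (swapsCenter_fold h₁).isPsEnd.isPEnd (fold_mem_movesCenterToCenter h₁).1
    id_not_mem_movesCenter fun b _ c _ h => mem_or_mem_of_pmul_mem_movesCenter h
  refine List.Nodup.length_le_ncard (l := [u, u', e, d, t, z, m]) ?_ hS (by simp [*])
  simp only [List.nodup_cons, List.mem_cons, List.not_mem_nil, not_or, List.nodup_nil]
  and_intros
  all_goals first | trivial | (rintro rfl; simp_all)

lemma seven_le_ncard_of_pwEndS (hn : 4 ≤ n) (hS : S.Finite)
    (hgen : {a | genFrom S a} = PwEndS n) : 7 ≤ S.ncard := by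
  have hM : ∀ a ∈ PwEndS n, IsPwEnd a := fun a ha => ha
  obtain ⟨u, hu, u', hu', e, he, d, hd, huu', ⟨hut, hui, hu0⟩, ⟨hut', hui', hu0'⟩,
    ⟨het, he0, -⟩, ⟨hd0, -⟩⟩ := exists_units_partial_offCenter hn hgen hM
      (fun σ hσ => (preservesCenter_pperm hσ).isPsEnd.isPEnd.isPwEnd)
      fun x => (preservesCenter_undef x).isPsEnd.isPEnd.isPwEnd
  obtain ⟨l₁, l₂, -, h₁, h₂, -, h₁₂, -, -⟩ := exists_three_leaves hn
  obtain ⟨t, ht, htt, hti, ht0, htz, -⟩ := exists_mem_of_setOf_genFrom_eq hgen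
    (preservesCenter_collapse h₂ h₁).isPsEnd.isPEnd.isPwEnd
    (collapse_mem_corankOneTotal h₂ h₁ h₁₂.symm)
    id_not_mem_corankOneTotal fun b hb c _ h => mem_or_mem_of_pmul_mem_corankOneTotal hn (hM b hb) h
  obtain ⟨w, hw, hwt, hw0, ⟨x, hx, hwx⟩, -⟩ := exists_mem_of_setOf_genFrom_eq hgen
    (isPwEnd_collapse_zero l₁) (collapse_mem_corankOneTotalToCenter h₁)
    id_not_mem_corankOneTotalToCenter fun b hb c _ h =>
      mem_or_mem_of_pmul_mem_corankOneTotalToCenter hn (hM b hb) h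
  have hwi : ¬ PInj w := fun hi => hx (hi x 0 0 hwx hw0)
  obtain ⟨m, hm, c, hc, hm0⟩ := exists_mem_of_setOf_genFrom_eq hgen
    (swapsCenter_fold h₁).isPsEnd.isPEnd.isPwEnd (fold_mem_movesCenterToCenter h₁).1
    id_not_mem_movesCenter fun b _ c _ h => mem_or_mem_of_pmul_mem_movesCenter h
  refine List.Nodup.length_le_ncard (l := [u, u', e, d, t, w, m]) ?_ hS (by simp [*])
  simp only [List.nodup_cons, List.mem_cons, List.not_mem_nil, not_or, List.nodup_nil]
  and_intros
  all_goals first | trivial | (rintro rfl; simp_all)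

lemma six_le_ncard_of_iEndS (hn : 4 ≤ n) (hS : S.Finite) (hgen : {a | genFrom S a} = IEndS n) :
    6 ≤ S.ncard := by
  have hM : ∀ a ∈ IEndS n, IsPwEnd a := fun a ha => ha.2.isPwEnd
  obtain ⟨u, hu, u', hu', e, he, d, hd, huu', ⟨hut, hui, hu0⟩, ⟨hut', hui', hu0'⟩,
    ⟨het, he0, -⟩, ⟨hd0, hdz, -⟩⟩ := exists_units_partial_offCenter hn hgen hM
      (fun σ hσ => ⟨pInj_pperm σ, (preservesCenter_pperm hσ).isPsEnd.isPEnd⟩)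
      fun x => ⟨pInj_undef x, (preservesCenter_undef x).isPsEnd.isPEnd⟩
  obtain ⟨l, -, -, hl, -⟩ := exists_three_leaves hn
  obtain ⟨z, hz, hz0, hzz, -⟩ := exists_mem_of_setOf_genFrom_eq hgen
    ⟨pInj_pmul_undef_zero_collapse l, isPEnd_of_map_zero_eq_none (by simp [undef])⟩
    (pmul_undef_zero_collapse_mem_corankOneOffCenterToCenter hl)
    id_not_mem_corankOneOffCenterToCenter fun b hb c hc h =>
      mem_or_mem_of_pmul_mem_corankOneOffCenterToCenter hn (hM b hb) hc.2 h
  obtain ⟨m, hm, c, hc, hm0⟩ := exists_mem_of_setOf_genFrom_eq hgen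
    ⟨pInj_edgeSwap l, (swapsCenter_edgeSwap hl).isPsEnd.isPEnd⟩
    (⟨l, hl, by simp [edgeSwap]⟩ : edgeSwap l ∈ movesCenter n)
    id_not_mem_movesCenter fun b _ c _ h => mem_or_mem_of_pmul_mem_movesCenter h
  refine List.Nodup.length_le_ncard (l := [u, u', e, d, z, m]) ?_ hS (by simp [*])
  simp only [List.nodup_cons, List.mem_cons, List.not_mem_nil, not_or, List.nodup_nil]
  and_intros
  all_goals first | trivial | (rintro rfl; simp_all)

end LowerBounds

section UpperBounds

variable {n : ℕ} [NeZero n]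

/-- Generators shared by the four monoids containing non-injective maps. -/
def commonGens (σ τ : Perm (Fin n)) (l₁ l₂ : Fin n) : Set (Fin n → Option (Fin n)) :=
  {pperm σ, pperm τ, undef 0, undef l₁, collapse l₂ l₁, fold l₁}

lemma ncard_commonGens_le (σ τ : Perm (Fin n)) (l₁ l₂ : Fin n) :
    (commonGens σ τ l₁ l₂).ncard ≤ 6 := by
  unfold commonGens
  iterate 5 refine (Set.ncard_insert_le _ _).trans (Nat.succ_le_succ ?_)
  exact (Set.ncard_singleton _).le

lemma commonGens_subset_psEndS {σ τ : Perm (Fin n)} (hσ : σ 0 = 0) (hτ : τ 0 = 0)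
    {l₁ l₂ : Fin n} (h₁ : l₁ ≠ 0) (h₂ : l₂ ≠ 0) : commonGens σ τ l₁ l₂ ⊆ PsEndS n := by
  simp only [commonGens, Set.insert_subset_iff, Set.singleton_subset_iff]
  exact ⟨(preservesCenter_pperm hσ).isPsEnd, (preservesCenter_pperm hτ).isPsEnd,
    (preservesCenter_undef 0).isPsEnd, (preservesCenter_undef l₁).isPsEnd,
    (preservesCenter_collapse h₂ h₁).isPsEnd, (swapsCenter_fold h₁).isPsEnd⟩

lemma genFrom_of_commonGens_subset {σ τ : Perm (Fin n)}
    (hperm : ∀ S : Set (Fin n → Option (Fin n)), pperm σ ∈ S → pperm τ ∈ S →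
      ∀ ρ : Perm (Fin n), ρ 0 = 0 → genFrom S (pperm ρ))
    {l₁ l₂ : Fin n} (h₁ : l₁ ≠ 0) (h₂ : l₂ ≠ 0) (h₁₂ : l₂ ≠ l₁)
    {S : Set (Fin n → Option (Fin n))} (hS : commonGens σ τ l₁ l₂ ⊆ S) :
    GeneratesCenterPerms S ∧ (∀ β, PreservesCenter β → genFrom S β) ∧
      ∀ c ≠ 0, genFrom S (fold c) := by
  simp only [commonGens, Set.insert_subset_iff, Set.singleton_subset_iff] at hS
  obtain ⟨hσS, hτS, hu0, hu, hcol, hfold⟩ := hS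
  have hperm' := hperm S hσS hτS
  exact ⟨hperm', forall_genFrom_of_preservesCenter hperm' h₁ h₂ h₁₂ hu hu0 hcol,
    fun c hc => genFrom_fold hperm' h₁ hfold hc⟩

lemma exists_generating_psEndS (hn : 4 ≤ n) :
    ∃ S, S.Finite ∧ S.ncard ≤ 6 ∧ S ⊆ PsEndS n ∧ {a | genFrom S a} = PsEndS n := by
  obtain ⟨σ, τ, hσ, hτ, hperm⟩ := exists_perm_pair_genFrom (0 : Fin n)
  obtain ⟨l₁, l₂, -, h₁, h₂, -, h₁₂, -, -⟩ := exists_three_leaves hn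
  obtain ⟨-, hpres, hfold⟩ :=
    genFrom_of_commonGens_subset hperm h₁ h₂ h₁₂.symm subset_rfl
  have hSM := commonGens_subset_psEndS hσ hτ h₁ h₂
  exact ⟨_, Set.toFinite _, ncard_commonGens_le σ τ l₁ l₂, hSM,
    setOf_genFrom_eq hSM preservesCenter_id.isPsEnd (fun _ _ => IsPsEnd.pmul)
      fun a ha => genFrom_of_isPsEnd hpres hfold h₁ ha⟩

lemma exists_generating_pswEndS (hn : 4 ≤ n) :
    ∃ S, S.Finite ∧ S.ncard ≤ 7 ∧ S ⊆ PswEndS n ∧ {a | genFrom S a} = PswEndS n := by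
  obtain ⟨σ, τ, hσ, hτ, hperm⟩ := exists_perm_pair_genFrom (0 : Fin n)
  obtain ⟨l₁, l₂, -, h₁, h₂, -, h₁₂, -, -⟩ := exists_three_leaves hn
  obtain ⟨-, hpres, hfold⟩ :=
    genFrom_of_commonGens_subset hperm h₁ h₂ h₁₂.symm (Set.subset_insert toCenter _)
  have hSM : insert toCenter (commonGens σ τ l₁ l₂) ⊆ PswEndS n :=
    Set.insert_subset isPswEnd_toCenter
      fun a ha => IsPsEnd.isPswEnd (commonGens_subset_psEndS hσ hτ h₁ h₂ ha)
  exact ⟨_, Set.toFinite _, (Set.ncard_insert_le _ _).trans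
    (Nat.succ_le_succ (ncard_commonGens_le σ τ l₁ l₂)), hSM,
    setOf_genFrom_eq hSM preservesCenter_id.isPsEnd.isPswEnd (fun _ _ => IsPswEnd.pmul)
      fun a ha => genFrom_of_isPswEnd hpres hfold (Set.mem_insert _ _) h₁ ha⟩

lemma exists_generating_pEndS (hn : 4 ≤ n) :
    ∃ S, S.Finite ∧ S.ncard ≤ 7 ∧ S ⊆ PEndS n ∧ {a | genFrom S a} = PEndS n := by
  obtain ⟨σ, τ, hσ, hτ, hperm⟩ := exists_perm_pair_genFrom (0 : Fin n)
  obtain ⟨l₁, l₂, -, h₁, h₂, -, h₁₂, -, -⟩ := exists_three_leaves hn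
  obtain ⟨hperm', hpres, hfold⟩ := genFrom_of_commonGens_subset hperm h₁ h₂ h₁₂.symm
    (Set.subset_insert (pmul (undef 0) (collapse l₁ 0)) _)
  have hSM : insert (pmul (undef 0) (collapse l₁ 0)) (commonGens σ τ l₁ l₂) ⊆ PEndS n :=
    Set.insert_subset (isPEnd_of_map_zero_eq_none (by simp [undef]))
      fun a ha => IsPsEnd.isPEnd (commonGens_subset_psEndS hσ hτ h₁ h₂ ha)
  exact ⟨_, Set.toFinite _, (Set.ncard_insert_le _ _).trans
    (Nat.succ_le_succ (ncard_commonGens_le σ τ l₁ l₂)), hSM,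
    setOf_genFrom_eq hSM preservesCenter_id.isPsEnd.isPEnd (fun _ _ => IsPEnd.pmul)
      fun a ha => genFrom_of_isPEnd hperm' hpres hfold h₁ (Set.mem_insert _ _) ha⟩

lemma exists_generating_pwEndS (hn : 4 ≤ n) :
    ∃ S, S.Finite ∧ S.ncard ≤ 7 ∧ S ⊆ PwEndS n ∧ {a | genFrom S a} = PwEndS n := by
  obtain ⟨σ, τ, hσ, hτ, hperm⟩ := exists_perm_pair_genFrom (0 : Fin n)
  obtain ⟨l₁, l₂, -, h₁, h₂, -, h₁₂, -, -⟩ := exists_three_leaves hn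
  have hsub := Set.subset_insert (collapse l₁ 0) (commonGens σ τ l₁ l₂)
  obtain ⟨hperm', hpres, hfold⟩ :=
    genFrom_of_commonGens_subset hperm h₁ h₂ h₁₂.symm hsub
  have hSM : insert (collapse l₁ 0) (commonGens σ τ l₁ l₂) ⊆ PwEndS n :=
    Set.insert_subset (isPwEnd_collapse_zero l₁)
      fun a ha => (IsPsEnd.isPEnd (commonGens_subset_psEndS hσ hτ h₁ h₂ ha)).isPwEnd
  exact ⟨_, Set.toFinite _, (Set.ncard_insert_le _ _).trans
    (Nat.succ_le_succ (ncard_commonGens_le σ τ l₁ l₂)), hSM,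
    setOf_genFrom_eq hSM preservesCenter_id.isPsEnd.isPEnd.isPwEnd (fun _ _ => IsPwEnd.pmul)
      fun a ha => genFrom_of_isPwEnd hperm' hpres hfold h₁
        (hsub (by simp [commonGens])) (Set.mem_insert _ _) ha⟩

lemma exists_generating_iEndS (hn : 4 ≤ n) :
    ∃ S, S.Finite ∧ S.ncard ≤ 6 ∧ S ⊆ IEndS n ∧ {a | genFrom S a} = IEndS n := by
  obtain ⟨σ, τ, hσ, hτ, hperm⟩ := exists_perm_pair_genFrom (0 : Fin n)
  obtain ⟨l, -, -, hl, -⟩ := exists_three_leaves hn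
  let S : Set (Fin n → Option (Fin n)) :=
    {pperm σ, pperm τ, undef 0, undef l, edgeSwap l, pmul (undef 0) (collapse l 0)}
  have hperm' := hperm S (by simp [S]) (by simp [S])
  have hSM : S ⊆ IEndS n := by
    simp only [S, Set.insert_subset_iff, Set.singleton_subset_iff]
    exact ⟨⟨pInj_pperm σ, (preservesCenter_pperm hσ).isPsEnd.isPEnd⟩,
      ⟨pInj_pperm τ, (preservesCenter_pperm hτ).isPsEnd.isPEnd⟩,
      ⟨pInj_undef 0, (preservesCenter_undef 0).isPsEnd.isPEnd⟩,
      ⟨pInj_undef l, (preservesCenter_undef l).isPsEnd.isPEnd⟩,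
      ⟨pInj_edgeSwap l, (swapsCenter_edgeSwap hl).isPsEnd.isPEnd⟩,
      ⟨pInj_pmul_undef_zero_collapse l, isPEnd_of_map_zero_eq_none (by simp [undef])⟩⟩
  have hncard : S.ncard ≤ 6 := by
    iterate 5 refine (Set.ncard_insert_le _ _).trans (Nat.succ_le_succ ?_)
    exact (Set.ncard_singleton _).le
  exact ⟨S, Set.toFinite _, hncard, hSM,
    setOf_genFrom_eq hSM ⟨pInj_pperm 1, preservesCenter_id.isPsEnd.isPEnd⟩
      (fun _ _ ha hb => ⟨ha.1.pmul hb.1, ha.2.pmul hb.2⟩)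
      fun a ha => genFrom_of_pInj_of_isPEnd hperm'
        (forall_genFrom_of_preservesCenter_of_pInj hperm' hl (by simp [S]) (by simp [S]))
        (fun c hc => genFrom_edgeSwap hperm' hl (by simp [S]) hc) hl (by simp [S]) ha.1 ha.2⟩

end UpperBounds

theorem stmt19 (n : ℕ) (hn : 4 ≤ n) :
    rankIs (PsEndS n) 6 ∧ rankIs (PswEndS n) 7 ∧ rankIs (PEndS n) 7
      ∧ rankIs (PwEndS n) 7 ∧ rankIs (IEndS n) 6 := by
  have : NeZero n := ⟨by omega⟩
  exact ⟨rankIs_of_le (exists_generating_psEndS hn) fun _ => six_le_ncard_of_psEndS hn,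
    rankIs_of_le (exists_generating_pswEndS hn) fun _ => seven_le_ncard_of_pswEndS hn,
    rankIs_of_le (exists_generating_pEndS hn) fun _ => seven_le_ncard_of_pEndS hn,
    rankIs_of_le (exists_generating_pwEndS hn) fun _ => seven_le_ncard_of_pwEndS hn,
    rankIs_of_le (exists_generating_iEndS hn) fun _ => six_le_ncard_of_iEndS hn⟩
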